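/- arXiv:1810.07403 — 4 statements merged into one kernel-verified Lean document; each statement's English description precedes it below -/
import Mathlib

section
/- Let p ≥ 1 and let Σ and Σ̂ be p×p real symmetric positive definite matrices. Let Σ^{-1/2} denote the inverse of the positive definite square root of Σ, let Δ = Σ^{-1/2} Σ̂ Σ^{-1/2}, and let κ(Δ) = λmax(Δ)/λmin(Δ) be its condition number. Then the supremum over nonzero μ ∈ ℝ^p of the quantity sqrt(μᵀΣ⁻¹μ) · sqrt(μᵀΣ̂⁻¹ΣΣ̂⁻¹μ) / (μᵀΣ̂⁻¹μ) equals (1/2)·sqrt(κ(Δ) + 1/κ(Δ) + 2), and this supremum is attained by some nonzero μ. -/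
open Real Matrix

/-- The square root of a positive semidefinite matrix (Mathlib's definition of December 2024,
since removed from Mathlib). -/
noncomputable def Matrix.PosSemidef.sqrt {n : Type*} [Fintype n] [DecidableEq n] {𝕜 : Type*}
    [RCLike 𝕜] [PartialOrder 𝕜] [StarOrderedRing 𝕜] {A : Matrix n n 𝕜} (hA : A.PosSemidef) : Matrix n n 𝕜 :=
  hA.1.eigenvectorUnitary.1 * diagonal ((↑) ∘ (√·) ∘ hA.1.eigenvalues) *
  (star hA.1.eigenvectorUnitary : Matrix n n 𝕜)

/-- Condition number `κ(M) = λmax(M)/λmin(M)` (ratio of the supremum to the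
infimum of the real spectrum). -/
noncomputable def condNum {p : ℕ} (M : Matrix (Fin p) (Fin p) ℝ) : ℝ :=
  sSup (spectrum ℝ M) / sInf (spectrum ℝ M)

private lemma sqrt_psd {p : ℕ} {S : Matrix (Fin p) (Fin p) ℝ} (hS : S.PosSemidef) :
    hS.sqrt.PosSemidef := by
  unfold Matrix.PosSemidef.sqrt
  have hD : (diagonal ((↑) ∘ (√·) ∘ hS.1.eigenvalues) : Matrix (Fin p) (Fin p) ℝ).PosSemidef := by
    rw [posSemidef_diagonal_iff]
    intro i
    simp [Real.sqrt_nonneg]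
  exact hD.mul_mul_conjTranspose_same _

private lemma sqrt_sq' {p : ℕ} {S : Matrix (Fin p) (Fin p) ℝ} (hS : S.PosSemidef) :
    hS.sqrt * hS.sqrt = S := by
  have h := hS.1.spectral_theorem
  rw [Unitary.conjStarAlgAut_apply] at h
  have h1 : (star hS.1.eigenvectorUnitary : Matrix (Fin p) (Fin p) ℝ) * hS.1.eigenvectorUnitary.1
      = 1 := Unitary.coe_star_mul_self hS.1.eigenvectorUnitary
  have hDD : (diagonal ((↑) ∘ (√·) ∘ hS.1.eigenvalues) : Matrix (Fin p) (Fin p) ℝ)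
      * diagonal ((↑) ∘ (√·) ∘ hS.1.eigenvalues) = diagonal (RCLike.ofReal ∘ hS.1.eigenvalues) := by
    rw [diagonal_mul_diagonal]
    congr 1
    funext i
    simp [Real.mul_self_sqrt (hS.eigenvalues_nonneg i)]
  unfold Matrix.PosSemidef.sqrt
  conv_rhs => rw [h]
  rw [← hDD]
  simp only [Matrix.mul_assoc]
  rw [← Matrix.mul_assoc (star _ : Matrix (Fin p) (Fin p) ℝ) (hS.1.eigenvectorUnitary.1), h1,
    Matrix.one_mul]
  rfl

private lemma conj_quad {p : ℕ} (P M : Matrix (Fin p) (Fin p) ℝ) (v w : Fin p → ℝ) :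
    (P *ᵥ v) ⬝ᵥ (M *ᵥ (P *ᵥ w)) = v ⬝ᵥ ((Pᵀ * M * P) *ᵥ w) := by
  simp [dotProduct_mulVec, ← vecMul_vecMul, vecMul_transpose]

private lemma arith {a b s X Y K : ℝ} (ha : 0 < a) (hb : 0 < b) (hs : 0 < s)
    (hs2 : s * s = a * b) (hXpos : 0 < X) (hYnn : 0 ≤ Y) (hKpos : 0 < K)
    (hkey : a * b * X + Y ≤ (a + b) * K) :
    Real.sqrt Y * Real.sqrt X / K ≤ (a + b) / (2 * s) := by
  have habXY : 0 ≤ a * b * X + Y := by positivity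
  have e1 : Y * X ≤ ((a + b) * K / (2 * s)) ^ 2 := by
    have e2 : 4 * (a * b) * (Y * X) ≤ ((a + b) * K) ^ 2 := by
      nlinarith [sq_nonneg (a * b * X - Y), hkey, habXY]
    have e3 : ((a + b) * K / (2 * s)) ^ 2 = ((a + b) * K) ^ 2 / (4 * (a * b)) := by
      rw [div_pow]
      congr 1
      nlinarith [hs2]
    rw [e3, le_div_iff₀ (by positivity)]
    nlinarith [e2]
  have e4 : Real.sqrt Y * Real.sqrt X ≤ (a + b) * K / (2 * s) := by
    rw [← Real.sqrt_mul hYnn]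
    calc Real.sqrt (Y * X) ≤ Real.sqrt (((a + b) * K / (2 * s)) ^ 2) :=
          Real.sqrt_le_sqrt e1
      _ = (a + b) * K / (2 * s) := Real.sqrt_sq (by positivity)
  rw [div_le_iff₀ hKpos]
  calc Real.sqrt Y * Real.sqrt X ≤ (a + b) * K / (2 * s) := e4
    _ = (a + b) / (2 * s) * K := by ring

set_option maxHeartbeats 2000000 in
private theorem core {p : ℕ} (hp : 1 ≤ p) (Δ : Matrix (Fin p) (Fin p) ℝ) (hΔ : Δ.PosDef) :
    IsGreatest
      {x : ℝ | ∃ v : Fin p → ℝ, v ≠ 0 ∧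
        x = Real.sqrt (v ⬝ᵥ ((Δ * Δ) *ᵥ v)) * Real.sqrt (v ⬝ᵥ v) / (v ⬝ᵥ (Δ *ᵥ v))}
      ((1 / 2) * Real.sqrt (condNum Δ + 1 / condNum Δ + 2)) := by
  have hH := hΔ.isHermitian
  set lam := hH.eigenvalues with hlam
  have hspecset : spectrum ℝ Δ = Set.range lam := hH.spectrum_real_eq_range_eigenvalues
  have : Nonempty (Fin p) := ⟨⟨0, hp⟩⟩
  have hne : (Set.range lam).Nonempty := Set.range_nonempty _
  have hfin : (Set.range lam).Finite := Set.finite_range _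
  set a := sSup (spectrum ℝ Δ) with hadef
  set b := sInf (spectrum ℝ Δ) with hbdef
  obtain ⟨i₀, hi₀⟩ : ∃ i, lam i = a := by
    have : a ∈ Set.range lam := by rw [hadef, hspecset]; exact hne.csSup_mem hfin
    exact this
  obtain ⟨j₀, hj₀⟩ : ∃ j, lam j = b := by
    have : b ∈ Set.range lam := by rw [hbdef, hspecset]; exact hne.csInf_mem hfin
    exact this
  have hub : ∀ i, lam i ≤ a := fun i => by
    rw [hadef, hspecset]; exact le_csSup hfin.bddAbove ⟨i, rfl⟩
  have hlb : ∀ i, b ≤ lam i := fun i => by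
    rw [hbdef, hspecset]; exact csInf_le hfin.bddBelow ⟨i, rfl⟩
  have hpos : ∀ i, 0 < lam i := fun i => hΔ.eigenvalues_pos i
  have hb : 0 < b := hj₀ ▸ hpos j₀
  have ha : 0 < a := hi₀ ▸ hpos i₀
  have hba : b ≤ a := (hlb i₀).trans (hub i₀)
  set s := Real.sqrt (a * b) with hsdef
  have hs : 0 < s := Real.sqrt_pos.mpr (mul_pos ha hb)
  have hs2 : s * s = a * b := Real.mul_self_sqrt (mul_pos ha hb).le
  have hcond : condNum Δ = a / b := rfl
  have hT : (1 / 2) * Real.sqrt (condNum Δ + 1 / condNum Δ + 2) = (a + b) / (2 * s) := by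
    have h1 : condNum Δ + 1 / condNum Δ + 2 = ((a + b) / s) ^ 2 := by
      rw [hcond]
      field_simp
      nlinarith [hs2, sq_nonneg (a+b)]
    rw [h1, Real.sqrt_sq (by positivity)]
    ring
  rw [hT]
  -- orthonormality
  have hortho : ∀ i j : Fin p, ⇑(hH.eigenvectorBasis i) ⬝ᵥ ⇑(hH.eigenvectorBasis j)
      = if i = j then 1 else 0 := by
    intro i j
    have h := orthonormal_iff_ite.mp (hH.eigenvectorBasis).orthonormal i j
    rw [← h]
    simp [PiLp.inner_apply, dotProduct, mul_comm]
  have heig : ∀ i, Δ *ᵥ ⇑(hH.eigenvectorBasis i) = lam i • ⇑(hH.eigenvectorBasis i) :=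
    fun i => hH.mulVec_eigenvectorBasis i
  constructor
  · -- membership: attainment
    by_cases hab : a = b
    · -- all eigenvalues equal; use a single eigenvector
      refine ⟨⇑(hH.eigenvectorBasis i₀), ?_, ?_⟩
      · intro h
        have := hortho i₀ i₀
        rw [h] at this
        simp at this
      · set u := ⇑(hH.eigenvectorBasis i₀) with hu
        have huu : u ⬝ᵥ u = 1 := by simpa using hortho i₀ i₀
        have hΔu : Δ *ᵥ u = a • u := by rw [← hi₀]; exact heig i₀
        have hX : u ⬝ᵥ (Δ *ᵥ u) = a := by
          rw [hΔu, dotProduct_smul, huu]; simp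
        have hY : u ⬝ᵥ ((Δ * Δ) *ᵥ u) = a * a := by
          rw [← mulVec_mulVec, hΔu, mulVec_smul, hΔu]
          simp [dotProduct_smul, smul_eq_mul, huu]
        rw [hX, hY, huu, Real.sqrt_one]
        rw [show a * a = a ^ 2 by ring, Real.sqrt_sq ha.le]
        have hsa : s = a := by
          rw [hsdef, ← hab, show a * a = a ^ 2 by ring, Real.sqrt_sq ha.le]
        rw [hsa, ← hab]
        field_simp
        ring
    · -- two distinct eigenvalues
      have hij : i₀ ≠ j₀ := by
        intro h; apply hab; rw [← hi₀, h, hj₀]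
      set u := ⇑(hH.eigenvectorBasis i₀) with hu
      set w := ⇑(hH.eigenvectorBasis j₀) with hw
      have huu : u ⬝ᵥ u = 1 := by simpa using hortho i₀ i₀
      have hww : w ⬝ᵥ w = 1 := by simpa using hortho j₀ j₀
      have huw : u ⬝ᵥ w = 0 := by
        have h := hortho i₀ j₀; rwa [if_neg hij] at h
      have hwu : w ⬝ᵥ u = 0 := by
        have h := hortho j₀ i₀; rwa [if_neg (Ne.symm hij)] at h
      have hΔu : Δ *ᵥ u = a • u := by rw [← hi₀]; exact heig i₀
      have hΔw : Δ *ᵥ w = b • w := by rw [← hj₀]; exact heig j₀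
      set sa := Real.sqrt a with hsa
      set sb := Real.sqrt b with hsb
      have hsa0 : 0 < sa := Real.sqrt_pos.mpr ha
      have hsb0 : 0 < sb := Real.sqrt_pos.mpr hb
      have hsa2 : sa * sa = a := Real.mul_self_sqrt ha.le
      have hsb2 : sb * sb = b := Real.mul_self_sqrt hb.le
      have hA : sa⁻¹ * sa⁻¹ = a⁻¹ := by rw [← mul_inv, hsa2]
      have hB : sb⁻¹ * sb⁻¹ = b⁻¹ := by rw [← mul_inv, hsb2]
      have hdot : ∀ α β γ δ : ℝ, (α • u + β • w) ⬝ᵥ (γ • u + δ • w) = α * γ + β * δ := by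
        intro α β γ δ
        simp only [dotProduct_add, add_dotProduct, dotProduct_smul, smul_dotProduct,
          huu, hww, huw, hwu, smul_eq_mul]
        ring
      set v := sa⁻¹ • u + sb⁻¹ • w with hv
      have hΔv : Δ *ᵥ v = (sa⁻¹ * a) • u + (sb⁻¹ * b) • w := by
        rw [hv, mulVec_add, mulVec_smul, mulVec_smul, hΔu, hΔw, smul_smul, smul_smul]
      have hX : v ⬝ᵥ v = a⁻¹ + b⁻¹ := by
        rw [hv, hdot, hA, hB]
      have hK : v ⬝ᵥ (Δ *ᵥ v) = 2 := by
        rw [hΔv, hv, hdot]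
        rw [show sa⁻¹ * (sa⁻¹ * a) = (sa⁻¹ * sa⁻¹) * a by ring,
          show sb⁻¹ * (sb⁻¹ * b) = (sb⁻¹ * sb⁻¹) * b by ring, hA, hB,
          inv_mul_cancel₀ ha.ne', inv_mul_cancel₀ hb.ne']
        norm_num
      have hY : v ⬝ᵥ ((Δ * Δ) *ᵥ v) = a + b := by
        rw [← mulVec_mulVec, hΔv, mulVec_add, mulVec_smul, mulVec_smul, hΔu, hΔw,
          smul_smul, smul_smul, hv, hdot]
        rw [show sa⁻¹ * (sa⁻¹ * a * a) = ((sa⁻¹ * sa⁻¹) * a) * a by ring,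
          show sb⁻¹ * (sb⁻¹ * b * b) = ((sb⁻¹ * sb⁻¹) * b) * b by ring, hA, hB,
          inv_mul_cancel₀ ha.ne', inv_mul_cancel₀ hb.ne', one_mul, one_mul]
      refine ⟨v, ?_, ?_⟩
      · intro h
        have h0 : v ⬝ᵥ v = 0 := by rw [h]; simp
        rw [hX] at h0
        have : 0 < a⁻¹ + b⁻¹ := by positivity
        linarith
      · rw [hX, hK, hY]
        have hprod : Real.sqrt (a + b) * Real.sqrt (a⁻¹ + b⁻¹) = (a + b) / s := by
          rw [← Real.sqrt_mul (by positivity)]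
          have h2 : (a + b) * (a⁻¹ + b⁻¹) = ((a + b) / s) ^ 2 := by
            rw [div_pow]
            rw [show s ^ 2 = a * b by rw [pow_two]; exact hs2]
            field_simp
            ring
          rw [h2, Real.sqrt_sq (by positivity)]
        rw [hprod]
        ring
  · -- upper bound
    rintro x ⟨v, hv, rfl⟩
    set U : Matrix (Fin p) (Fin p) ℝ := (hH.eigenvectorUnitary : Matrix (Fin p) (Fin p) ℝ)
      with hUdef
    have hspec : Δ = U * diagonal lam * star U := by
      have := hH.spectral_theorem
      simpa using this
    have h1 : star U * U = 1 := Unitary.coe_star_mul_self hH.eigenvectorUnitary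
    have h2 : U * star U = 1 := Unitary.coe_mul_star_self hH.eigenvectorUnitary
    set c : Fin p → ℝ := star U *ᵥ v with hc
    have hvc : v = U *ᵥ c := by
      rw [hc, mulVec_mulVec, h2, one_mulVec]
    have hUt : Uᵀ = star U := rfl
    have hUkey : ∀ x y : Fin p → ℝ, (U *ᵥ x) ⬝ᵥ (U *ᵥ y) = x ⬝ᵥ y := by
      intro x y
      have h3 := conj_quad U 1 x y
      rw [Matrix.one_mulVec, hUt] at h3
      rw [h3, Matrix.mul_one, h1, Matrix.one_mulVec]
    have hdiagv : ∀ y : Fin p → ℝ, diagonal lam *ᵥ y = fun i => lam i * y i := by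
      intro y; funext i; simp [mulVec_diagonal]
    have hact : ∀ y : Fin p → ℝ, Δ *ᵥ (U *ᵥ y) = U *ᵥ (fun i => lam i * y i) := by
      intro y
      rw [hspec, mulVec_mulVec, Matrix.mul_assoc (U * diagonal lam), h1, Matrix.mul_one,
        ← hdiagv y, mulVec_mulVec]
    have hX : v ⬝ᵥ v = ∑ i, c i * c i := by
      rw [hvc, hUkey]; rfl
    have hK : v ⬝ᵥ (Δ *ᵥ v) = ∑ i, c i * (lam i * c i) := by
      rw [hvc, hact, hUkey]; rfl
    have hY : v ⬝ᵥ ((Δ * Δ) *ᵥ v) = ∑ i, (lam i * c i) * (lam i * c i) := by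
      rw [← mulVec_mulVec, hvc, hact, hact, hUkey]
      simp only [dotProduct]
      exact Finset.sum_congr rfl fun i _ => by ring
    have hXpos : 0 < v ⬝ᵥ v := by
      have h0 : 0 ≤ v ⬝ᵥ v := Finset.sum_nonneg fun i _ => mul_self_nonneg (v i)
      exact h0.lt_of_ne fun h => hv (dotProduct_self_eq_zero.mp h.symm)
    have hKpos : 0 < v ⬝ᵥ (Δ *ᵥ v) := by
      have := hΔ.dotProduct_mulVec_pos hv
      simpa using this
    have hYnn : 0 ≤ v ⬝ᵥ ((Δ * Δ) *ᵥ v) := by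
      rw [hY]
      exact Finset.sum_nonneg fun i _ => mul_self_nonneg _
    have hkey : a * b * (v ⬝ᵥ v) + v ⬝ᵥ ((Δ * Δ) *ᵥ v) ≤ (a + b) * (v ⬝ᵥ (Δ *ᵥ v)) := by
      rw [hX, hY, hK, Finset.mul_sum, Finset.mul_sum, ← Finset.sum_add_distrib]
      apply Finset.sum_le_sum
      intro i _
      nlinarith [mul_nonneg (mul_nonneg (sub_nonneg.2 (hub i)) (sub_nonneg.2 (hlb i)))
        (mul_self_nonneg (c i)), hpos i, mul_self_nonneg (c i)]
    exact arith ha hb hs hs2 hXpos hYnn hKpos hkey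

set_option maxHeartbeats 1000000 in
/-- with `Δ = Σ^{-1/2} Σ̂ Σ^{-1/2}` (where `Σ^{-1/2}` is the inverse of
the positive definite square root of `Σ`), the supremum over nonzero `μ` of
`sqrt(μᵀΣ⁻¹μ)·sqrt(μᵀΣ̂⁻¹ΣΣ̂⁻¹μ)/(μᵀΣ̂⁻¹μ)` equals `(1/2)·sqrt(κ(Δ)+1/κ(Δ)+2)`,
and it is attained. -/
theorem stmt0 {p : ℕ} (hp : 1 ≤ p) (S Shat : Matrix (Fin p) (Fin p) ℝ)
    (hS : S.PosDef) (hShat : Shat.PosDef) :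
    IsGreatest
      {x : ℝ | ∃ μ : Fin p → ℝ, μ ≠ 0 ∧
        x = Real.sqrt (μ ⬝ᵥ (S⁻¹ *ᵥ μ)) * Real.sqrt (μ ⬝ᵥ ((Shat⁻¹ * S * Shat⁻¹) *ᵥ μ))
              / (μ ⬝ᵥ (Shat⁻¹ *ᵥ μ))}
      ((1 / 2) * Real.sqrt
        (condNum ((hS.posSemidef.sqrt)⁻¹ * Shat * (hS.posSemidef.sqrt)⁻¹)
          + 1 / condNum ((hS.posSemidef.sqrt)⁻¹ * Shat * (hS.posSemidef.sqrt)⁻¹) + 2)) := by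
  set R := hS.posSemidef.sqrt with hRdef
  have hRps : R.PosSemidef := sqrt_psd hS.posSemidef
  have hRsq : R * R = S := sqrt_sq' hS.posSemidef
  have hR : R.PosDef := by
    refine .of_dotProduct_mulVec_pos hRps.1 (fun x hx => ?_)
    rcases (hRps.dotProduct_mulVec_nonneg x).lt_or_eq with h | h
    · exact h
    · exfalso
      have hR0 : R *ᵥ x = 0 := (hRps.dotProduct_mulVec_zero_iff x).mp h.symm
      have hS0 : S *ᵥ x = 0 := by
        rw [← hRsq, ← mulVec_mulVec, hR0, mulVec_zero]
      have := hS.dotProduct_mulVec_pos hx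
      rw [hS0] at this
      simp at this
  have hRt : Rᵀ = R := by simpa using hRps.1.eq
  have hRdet : IsUnit R.det := hR.isUnit.map detMonoidHom
  have hRinv : R⁻¹.PosDef := hR.inv
  have hRinvT : (R⁻¹)ᵀ = R⁻¹ := by simpa using hRinv.isHermitian.eq
  set Δ := R⁻¹ * Shat * R⁻¹ with hΔdef
  have hΔ : Δ.PosDef := by
    refine .of_dotProduct_mulVec_pos ?_ (fun x hx => ?_)
    · show Δᴴ = Δ
      rw [hΔdef, conjTranspose_mul, conjTranspose_mul, hRinv.isHermitian.eq,
        hShat.isHermitian.eq, Matrix.mul_assoc]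
    · have hx' : R⁻¹ *ᵥ x ≠ 0 := by
        intro h
        apply hx
        have : R *ᵥ (R⁻¹ *ᵥ x) = x := by
          rw [mulVec_mulVec, mul_nonsing_inv _ hRdet, one_mulVec]
        rw [h, mulVec_zero] at this
        exact this.symm
      have h := hShat.dotProduct_mulVec_pos hx'
      have hq := conj_quad R⁻¹ Shat x x
      rw [hRinvT] at hq
      rw [hΔdef]
      simp only [star_trivial] at h ⊢
      rw [← hq]
      simpa using h
  have hΔt : Δᵀ = Δ := by simpa using hΔ.isHermitian.eq
  have hΔdet : IsUnit Δ.det := hΔ.isUnit.map detMonoidHom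
  have c1 : ∀ B : Matrix (Fin p) (Fin p) ℝ, R * (R⁻¹ * B) = B :=
    fun B => mul_nonsing_inv_cancel_left R B hRdet
  have c2 : ∀ B : Matrix (Fin p) (Fin p) ℝ, R⁻¹ * (R * B) = B :=
    fun B => nonsing_inv_mul_cancel_left R B hRdet
  have c3 : ∀ B : Matrix (Fin p) (Fin p) ℝ, Δ * (Δ⁻¹ * B) = B :=
    fun B => mul_nonsing_inv_cancel_left Δ B hΔdet
  have c4 : ∀ B : Matrix (Fin p) (Fin p) ℝ, Δ⁻¹ * (Δ * B) = B :=
    fun B => nonsing_inv_mul_cancel_left Δ B hΔdet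
  have hShat_eq : Shat = R * Δ * R := by
    rw [hΔdef, Matrix.mul_assoc, Matrix.mul_assoc, nonsing_inv_mul _ hRdet,
      Matrix.mul_one, c1]
  have hShat_inv : Shat⁻¹ = R⁻¹ * Δ⁻¹ * R⁻¹ := by
    rw [hShat_eq, Matrix.mul_inv_rev, Matrix.mul_inv_rev, Matrix.mul_assoc]
  have hS_inv : S⁻¹ = R⁻¹ * R⁻¹ := by rw [← hRsq, Matrix.mul_inv_rev]
  have hPt : (R * Δ)ᵀ = Δ * R := by rw [transpose_mul, hRt, hΔt]
  have E1 : (R * Δ)ᵀ * S⁻¹ * (R * Δ) = Δ * Δ := by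
    rw [hPt, hS_inv]
    simp only [Matrix.mul_assoc, c1, c2]
  have E3 : (R * Δ)ᵀ * Shat⁻¹ * (R * Δ) = Δ := by
    rw [hPt, hShat_inv]
    simp only [Matrix.mul_assoc, c1, c2, c3, c4]
  have E2 : (R * Δ)ᵀ * (Shat⁻¹ * S * Shat⁻¹) * (R * Δ) = 1 := by
    rw [hPt, hShat_inv, ← hRsq]
    simp only [Matrix.mul_assoc, c1, c2, c3, c4]
    exact nonsing_inv_mul _ hΔdet
  have hrec : ∀ μ : Fin p → ℝ, (R * Δ) *ᵥ ((Δ⁻¹ * R⁻¹) *ᵥ μ) = μ := by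
    intro μ
    rw [mulVec_mulVec, Matrix.mul_assoc, c3, mul_nonsing_inv _ hRdet, one_mulVec]
  have hrec2 : ∀ v : Fin p → ℝ, (Δ⁻¹ * R⁻¹) *ᵥ ((R * Δ) *ᵥ v) = v := by
    intro v
    rw [mulVec_mulVec, Matrix.mul_assoc, c2, nonsing_inv_mul _ hΔdet, one_mulVec]
  have hval : ∀ v : Fin p → ℝ,
      Real.sqrt (((R * Δ) *ᵥ v) ⬝ᵥ (S⁻¹ *ᵥ ((R * Δ) *ᵥ v)))
        * Real.sqrt (((R * Δ) *ᵥ v) ⬝ᵥ ((Shat⁻¹ * S * Shat⁻¹) *ᵥ ((R * Δ) *ᵥ v)))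
        / (((R * Δ) *ᵥ v) ⬝ᵥ (Shat⁻¹ *ᵥ ((R * Δ) *ᵥ v)))
      = Real.sqrt (v ⬝ᵥ ((Δ * Δ) *ᵥ v)) * Real.sqrt (v ⬝ᵥ v) / (v ⬝ᵥ (Δ *ᵥ v)) := by
    intro v
    rw [conj_quad, conj_quad, conj_quad, E1, E2, E3, Matrix.one_mulVec]
  have hsets : {x : ℝ | ∃ μ : Fin p → ℝ, μ ≠ 0 ∧
        x = Real.sqrt (μ ⬝ᵥ (S⁻¹ *ᵥ μ)) * Real.sqrt (μ ⬝ᵥ ((Shat⁻¹ * S * Shat⁻¹) *ᵥ μ))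
              / (μ ⬝ᵥ (Shat⁻¹ *ᵥ μ))}
      = {x : ℝ | ∃ v : Fin p → ℝ, v ≠ 0 ∧
        x = Real.sqrt (v ⬝ᵥ ((Δ * Δ) *ᵥ v)) * Real.sqrt (v ⬝ᵥ v) / (v ⬝ᵥ (Δ *ᵥ v))} := by
    ext x
    simp only [Set.mem_setOf_eq]
    constructor
    · rintro ⟨μ, hμ, rfl⟩
      refine ⟨(Δ⁻¹ * R⁻¹) *ᵥ μ, fun h => hμ ?_, ?_⟩
      · rw [← hrec μ, h, mulVec_zero]
      · conv_lhs => rw [← hrec μ]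
        exact hval _
    · rintro ⟨v, hv, rfl⟩
      refine ⟨(R * Δ) *ᵥ v, fun h => hv ?_, ?_⟩
      · rw [← hrec2 v, h, mulVec_zero]
      · exact (hval v).symm
  rw [hsets]
  exact core hp Δ hΔ
end

section
/- Fix γ > 0 and ℓ > 1 + √γ. Then ℓ₁⁺(γ) > 1 + √γ, and for every η > 0 one has max(1, ν₊(A(ℓ, η₁*(ℓ;γ); γ))) / min(1, ν₋(A(ℓ, η₁*(ℓ;γ); γ))) ≤ max(1, ν₊(A(ℓ,η;γ))) / min(1, ν₋(A(ℓ,η;γ))); that is, the single-spike shrinker η₁*(ℓ;γ) minimizes the condition-number objective η ↦ max(1,ν₊(A(ℓ,η;γ)))/min(1,ν₋(A(ℓ,η;γ))) over η > 0. -/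
open Real Matrix

/-- Cosine `c(ℓ;γ)` from spiked covariance asymptotics. -/
noncomputable def cP (γ ℓ : ℝ) : ℝ :=
  if 1 + Real.sqrt γ < ℓ then Real.sqrt ((1 - γ / (ℓ - 1) ^ 2) / (1 + γ / (ℓ - 1))) else 0

/-- Sine `s(ℓ;γ) = sqrt(1 - c²)`. -/
noncomputable def sP (γ ℓ : ℝ) : ℝ := Real.sqrt (1 - (cP γ ℓ) ^ 2)

/-- The 2×2 block `A(ℓ,η;γ)` of the asymptotic pivot. -/
noncomputable def Amat (γ ℓ η : ℝ) : Matrix (Fin 2) (Fin 2) ℝ :=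
  !![(η * (cP γ ℓ) ^ 2 + (sP γ ℓ) ^ 2) / ℓ, (η - 1) * cP γ ℓ * sP γ ℓ / Real.sqrt ℓ;
     (η - 1) * cP γ ℓ * sP γ ℓ / Real.sqrt ℓ, (cP γ ℓ) ^ 2 + η * (sP γ ℓ) ^ 2]

/-- Largest eigenvalue `ν₊(A(ℓ,η;γ))` (supremum of the real spectrum). -/
noncomputable def nuP (γ ℓ η : ℝ) : ℝ := sSup (spectrum ℝ (Amat γ ℓ η))

/-- Smallest eigenvalue `ν₋(A(ℓ,η;γ))` (infimum of the real spectrum). -/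
noncomputable def nuM (γ ℓ η : ℝ) : ℝ := sInf (spectrum ℝ (Amat γ ℓ η))

/-- Threshold `ℓ₁⁺(γ) = 1 + (γ + sqrt(γ² + 8γ))/2`. -/
noncomputable def ellOnePlus (γ : ℝ) : ℝ := 1 + (γ + Real.sqrt (γ ^ 2 + 8 * γ)) / 2

/-- Optimal single-spike shrinker `η₁*(ℓ;γ)`. -/
noncomputable def eta1star (γ ℓ : ℝ) : ℝ :=
  if ellOnePlus γ < ℓ then ℓ / (1 + γ + 2 * γ / (ℓ - 1)) else 1

/-- Optimal single-spike loss `κ₁*(ℓ;γ)`. -/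
noncomputable def kappa1star (γ ℓ : ℝ) : ℝ :=
  nuP γ ℓ (eta1star γ ℓ) / nuM γ ℓ (eta1star γ ℓ)

/-- `a(ℓ;γ) = c²/ℓ + s²`. -/
noncomputable def aP (γ ℓ : ℝ) : ℝ := (cP γ ℓ) ^ 2 / ℓ + (sP γ ℓ) ^ 2

/-- `b(ℓ;γ) = s²/ℓ + c²`. -/
noncomputable def bP (γ ℓ : ℝ) : ℝ := (sP γ ℓ) ^ 2 / ℓ + (cP γ ℓ) ^ 2

/-- Multi-spike condition-number objective `K_r((ℓᵢ),(ηᵢ);γ)`. -/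
noncomputable def Kr (γ : ℝ) {r : ℕ} (ℓ η : Fin r → ℝ) : ℝ :=
  max 1 (⨆ i, nuP γ (ℓ i) (η i)) / min 1 (⨅ i, nuM γ (ℓ i) (η i))

/- ===== auxiliary development ===== -/

noncomputable def TT (γ ℓ η : ℝ) : ℝ := η * aP γ ℓ + bP γ ℓ
noncomputable def SS (γ ℓ η : ℝ) : ℝ := Real.sqrt ((TT γ ℓ η)^2 - 4*η/ℓ)

lemma one_lt_ell {γ ℓ : ℝ} (hγ : 0 < γ) (hℓ : 1 + Real.sqrt γ < ℓ) : 1 < ℓ := by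
  have := Real.sqrt_nonneg γ; linarith

lemma gamma_lt_m_sq {γ ℓ : ℝ} (hγ : 0 < γ) (hℓ : 1 + Real.sqrt γ < ℓ) : γ < (ℓ - 1)^2 := by
  have h1 : Real.sqrt γ < ℓ - 1 := by linarith
  have h2 := Real.sqrt_nonneg γ
  nlinarith [Real.sq_sqrt hγ.le]

lemma cP_sq {γ ℓ : ℝ} (hγ : 0 < γ) (hℓ : 1 + Real.sqrt γ < ℓ) :
    (cP γ ℓ)^2 = ((ℓ-1)^2 - γ)/((ℓ-1)*((ℓ-1)+γ)) := by
  have hm : 0 < ℓ - 1 := by have := Real.sqrt_nonneg γ; linarith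
  have h2 := gamma_lt_m_sq hγ hℓ
  rw [cP, if_pos hℓ, Real.sq_sqrt]
  · rw [div_eq_div_iff] <;> [skip; positivity; positivity]
    field_simp
  · apply div_nonneg
    · rw [sub_nonneg, div_le_one (by positivity)]; linarith
    · have : 0 < γ / (ℓ - 1) := by positivity
      linarith

lemma cP_sq_lt_one {γ ℓ : ℝ} (hγ : 0 < γ) (hℓ : 1 + Real.sqrt γ < ℓ) : (cP γ ℓ)^2 < 1 := by
  have hm : 0 < ℓ - 1 := by have := Real.sqrt_nonneg γ; linarith
  rw [cP_sq hγ hℓ, div_lt_one (by positivity)]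
  nlinarith

lemma sP_sq {γ ℓ : ℝ} (hγ : 0 < γ) (hℓ : 1 + Real.sqrt γ < ℓ) :
    (sP γ ℓ)^2 = 1 - (cP γ ℓ)^2 := by
  rw [sP, Real.sq_sqrt]
  have := cP_sq_lt_one hγ hℓ; linarith

lemma pyth {γ ℓ : ℝ} (hγ : 0 < γ) (hℓ : 1 + Real.sqrt γ < ℓ) :
    (cP γ ℓ)^2 + (sP γ ℓ)^2 = 1 := by
  rw [sP_sq hγ hℓ]; ring

lemma sP_sq_pos {γ ℓ : ℝ} (hγ : 0 < γ) (hℓ : 1 + Real.sqrt γ < ℓ) : 0 < (sP γ ℓ)^2 := by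
  rw [sP_sq hγ hℓ]; have := cP_sq_lt_one hγ hℓ; linarith

lemma sP_sq_val {γ ℓ : ℝ} (hγ : 0 < γ) (hℓ : 1 + Real.sqrt γ < ℓ) :
    (sP γ ℓ)^2 = γ*ℓ/((ℓ-1)*((ℓ-1)+γ)) := by
  have hm : 0 < ℓ - 1 := by have := Real.sqrt_nonneg γ; linarith
  rw [sP_sq hγ hℓ, cP_sq hγ hℓ]
  field_simp
  ring

lemma aP_pos {γ ℓ : ℝ} (hγ : 0 < γ) (hℓ : 1 + Real.sqrt γ < ℓ) : 0 < aP γ ℓ := by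
  have h1 := one_lt_ell hγ hℓ
  have h2 := sP_sq_pos hγ hℓ
  have h3 : (0:ℝ) ≤ (cP γ ℓ)^2 / ℓ := by positivity
  unfold aP; linarith

lemma bP_pos {γ ℓ : ℝ} (hγ : 0 < γ) (hℓ : 1 + Real.sqrt γ < ℓ) : 0 < bP γ ℓ := by
  have h1 := one_lt_ell hγ hℓ
  have h2 := sP_sq_pos hγ hℓ
  have h3 : (0:ℝ) ≤ (cP γ ℓ)^2 := sq_nonneg _
  have h4 : 0 < (sP γ ℓ)^2 / ℓ := by positivity
  unfold bP; linarith

lemma TT_pos {γ ℓ η : ℝ} (hγ : 0 < γ) (hℓ : 1 + Real.sqrt γ < ℓ) (hη : 0 < η) :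
    0 < TT γ ℓ η := by
  have := aP_pos hγ hℓ; have := bP_pos hγ hℓ; unfold TT; nlinarith

lemma detkey {γ ℓ : ℝ} (η : ℝ) (hγ : 0 < γ) (hℓ : 1 + Real.sqrt γ < ℓ) :
    (η * (cP γ ℓ) ^ 2 + (sP γ ℓ) ^ 2) / ℓ * ((cP γ ℓ) ^ 2 + η * (sP γ ℓ) ^ 2)
      - ((η - 1) * cP γ ℓ * sP γ ℓ / Real.sqrt ℓ)^2 = η / ℓ := by
  have hl0 : (0:ℝ) < ℓ := lt_trans one_pos (one_lt_ell hγ hℓ)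
  have h2 : Real.sqrt ℓ ^ 2 = ℓ := Real.sq_sqrt hl0.le
  have hp := pyth hγ hℓ
  have key : (η * (cP γ ℓ) ^ 2 + (sP γ ℓ) ^ 2) * ((cP γ ℓ) ^ 2 + η * (sP γ ℓ) ^ 2)
      - ((η - 1) * cP γ ℓ * sP γ ℓ)^2 = η := by
    linear_combination (η * ((cP γ ℓ)^2 + (sP γ ℓ)^2 + 1)) * hp
  calc (η * (cP γ ℓ) ^ 2 + (sP γ ℓ) ^ 2) / ℓ * ((cP γ ℓ) ^ 2 + η * (sP γ ℓ) ^ 2)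
      - ((η - 1) * cP γ ℓ * sP γ ℓ / Real.sqrt ℓ)^2
      = ((η * (cP γ ℓ) ^ 2 + (sP γ ℓ) ^ 2) * ((cP γ ℓ) ^ 2 + η * (sP γ ℓ) ^ 2)
          - ((η - 1) * cP γ ℓ * sP γ ℓ)^2) / ℓ := by
        rw [div_pow, h2]; ring
    _ = η / ℓ := by rw [key]

lemma TT_sum {γ ℓ : ℝ} (η : ℝ) :
    (η * (cP γ ℓ) ^ 2 + (sP γ ℓ) ^ 2) / ℓ + ((cP γ ℓ) ^ 2 + η * (sP γ ℓ) ^ 2) = TT γ ℓ η := by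
  unfold TT aP bP; ring

lemma disc_nonneg {γ ℓ : ℝ} (η : ℝ) (hγ : 0 < γ) (hℓ : 1 + Real.sqrt γ < ℓ) :
    0 ≤ (TT γ ℓ η)^2 - 4*η/ℓ := by
  have h1 := detkey η hγ hℓ
  have h2 := TT_sum (γ := γ) (ℓ := ℓ) η
  have heq : (TT γ ℓ η)^2 - 4*η/ℓ =
      ((η * (cP γ ℓ) ^ 2 + (sP γ ℓ) ^ 2) / ℓ - ((cP γ ℓ) ^ 2 + η * (sP γ ℓ) ^ 2))^2
        + 4 * ((η - 1) * cP γ ℓ * sP γ ℓ / Real.sqrt ℓ)^2 := by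
    linear_combination (-(TT γ ℓ η + (η * (cP γ ℓ) ^ 2 + (sP γ ℓ) ^ 2) / ℓ
      + ((cP γ ℓ) ^ 2 + η * (sP γ ℓ) ^ 2))) * h2 + 4 * h1
  rw [heq]; positivity

lemma SS_nonneg' (γ ℓ η : ℝ) : 0 ≤ SS γ ℓ η := Real.sqrt_nonneg _

lemma SS_sq {γ ℓ : ℝ} (η : ℝ) (hγ : 0 < γ) (hℓ : 1 + Real.sqrt γ < ℓ) :
    (SS γ ℓ η)^2 = (TT γ ℓ η)^2 - 4*η/ℓ := Real.sq_sqrt (disc_nonneg η hγ hℓ)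

lemma spectrum_eq {γ ℓ : ℝ} (η : ℝ) (hγ : 0 < γ) (hℓ : 1 + Real.sqrt γ < ℓ) :
    spectrum ℝ (Amat γ ℓ η) =
      {(TT γ ℓ η - SS γ ℓ η)/2, (TT γ ℓ η + SS γ ℓ η)/2} := by
  ext r
  have hmem : r ∈ spectrum ℝ (Amat γ ℓ η) ↔
      (r - Amat γ ℓ η 0 0) * (r - Amat γ ℓ η 1 1) - Amat γ ℓ η 0 1 * Amat γ ℓ η 1 0 = 0 := by
    rw [spectrum.mem_iff, Matrix.isUnit_iff_isUnit_det, isUnit_iff_ne_zero, not_not]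
    rw [Matrix.det_fin_two]
    simp [Matrix.algebraMap_matrix_apply, Matrix.sub_apply]
  have hent00 : Amat γ ℓ η 0 0 = (η * (cP γ ℓ) ^ 2 + (sP γ ℓ) ^ 2) / ℓ := by simp [Amat]
  have hent01 : Amat γ ℓ η 0 1 = (η - 1) * cP γ ℓ * sP γ ℓ / Real.sqrt ℓ := by simp [Amat]
  have hent10 : Amat γ ℓ η 1 0 = (η - 1) * cP γ ℓ * sP γ ℓ / Real.sqrt ℓ := by simp [Amat]
  have hent11 : Amat γ ℓ η 1 1 = (cP γ ℓ) ^ 2 + η * (sP γ ℓ) ^ 2 := by simp [Amat]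
  rw [hmem, hent00, hent01, hent10, hent11]
  have hfact : ∀ x : ℝ, (x - (η * (cP γ ℓ) ^ 2 + (sP γ ℓ) ^ 2) / ℓ) * (x - ((cP γ ℓ) ^ 2 + η * (sP γ ℓ) ^ 2))
      - ((η - 1) * cP γ ℓ * sP γ ℓ / Real.sqrt ℓ) * ((η - 1) * cP γ ℓ * sP γ ℓ / Real.sqrt ℓ)
      = (x - (TT γ ℓ η - SS γ ℓ η)/2) * (x - (TT γ ℓ η + SS γ ℓ η)/2) := by
    intro x
    have h1 := detkey η hγ hℓ
    have h2 := TT_sum (γ := γ) (ℓ := ℓ) η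
    have h3 := SS_sq η hγ hℓ
    linear_combination (-x) * h2 + h1 + h3/4
  rw [hfact r, mul_eq_zero, sub_eq_zero, sub_eq_zero]
  simp [Set.mem_insert_iff, Set.mem_singleton_iff]

lemma nuP_eq {γ ℓ : ℝ} (η : ℝ) (hγ : 0 < γ) (hℓ : 1 + Real.sqrt γ < ℓ) :
    nuP γ ℓ η = (TT γ ℓ η + SS γ ℓ η)/2 := by
  rw [nuP, spectrum_eq η hγ hℓ, csSup_pair]
  have := SS_nonneg' γ ℓ η
  exact sup_eq_right.mpr (by linarith)

lemma nuM_eq {γ ℓ : ℝ} (η : ℝ) (hγ : 0 < γ) (hℓ : 1 + Real.sqrt γ < ℓ) :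
    nuM γ ℓ η = (TT γ ℓ η - SS γ ℓ η)/2 := by
  rw [nuM, spectrum_eq η hγ hℓ, csInf_pair]
  have := SS_nonneg' γ ℓ η
  exact inf_eq_left.mpr (by linarith)

lemma SS_lt_TT {γ ℓ η : ℝ} (hγ : 0 < γ) (hℓ : 1 + Real.sqrt γ < ℓ) (hη : 0 < η) :
    SS γ ℓ η < TT γ ℓ η := by
  have h1 := SS_sq η hγ hℓ
  have h2 := TT_pos hγ hℓ hη
  have h3 := SS_nonneg' γ ℓ η
  have hl : 0 < ℓ := lt_trans one_pos (one_lt_ell hγ hℓ)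
  have h4 : 0 < 4*η/ℓ := by positivity
  nlinarith

lemma hab {γ ℓ : ℝ} (hγ : 0 < γ) (hℓ : 1 + Real.sqrt γ < ℓ) : aP γ ℓ + bP γ ℓ = 1 + 1/ℓ := by
  have hp := pyth hγ hℓ
  unfold aP bP
  linear_combination (1+1/ℓ) * hp

lemma q_one {γ ℓ : ℝ} (η : ℝ) (hγ : 0 < γ) (hℓ : 1 + Real.sqrt γ < ℓ) :
    1 - TT γ ℓ η + η/ℓ = (1-η) * (sP γ ℓ)^2 * (1 - 1/ℓ) := by
  have hp := pyth hγ hℓ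
  unfold TT aP bP
  linear_combination (-(1+η/ℓ)) * hp

lemma q_invl {γ ℓ : ℝ} (η : ℝ) (hγ : 0 < γ) (hℓ : 1 + Real.sqrt γ < ℓ) :
    1/ℓ^2 - TT γ ℓ η * (1/ℓ) + η/ℓ = (cP γ ℓ)^2 * (1 - 1/ℓ) * (η - 1) * (1/ℓ) := by
  have hp := pyth hγ hℓ
  unfold TT aP bP
  linear_combination (-(1/ℓ^2 + η/ℓ)) * hp

lemma nuP_le_one' {γ ℓ η : ℝ} (hγ : 0 < γ) (hℓ : 1 + Real.sqrt γ < ℓ) (hη : 0 < η)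
    (hη1 : η ≤ 1) : (TT γ ℓ η + SS γ ℓ η)/2 ≤ 1 := by
  have hl := one_lt_ell hγ hℓ
  have hl0 : 0 < ℓ := lt_trans one_pos hl
  have hinv : 1/ℓ < 1 := by rw [div_lt_one hl0]; linarith
  have hq := q_one η hγ hℓ
  have hS := SS_sq η hγ hℓ
  have hs2 := sP_sq_pos hγ hℓ
  have hTle : TT γ ℓ η ≤ 1 + 1/ℓ := by
    have h1 := hab hγ hℓ
    have h2 := aP_pos hγ hℓ
    unfold TT at *
    nlinarith
  have hSn := SS_nonneg' γ ℓ η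
  have hprod : (1 - (TT γ ℓ η - SS γ ℓ η)/2) * (1 - (TT γ ℓ η + SS γ ℓ η)/2) ≥ 0 := by
    have : (1 - (TT γ ℓ η - SS γ ℓ η)/2) * (1 - (TT γ ℓ η + SS γ ℓ η)/2)
        = 1 - TT γ ℓ η + η/ℓ := by linear_combination (-1/4) * hS
    rw [this, hq]
    have h5 : 0 < 1 - 1/ℓ := by linarith
    have h6 : (0:ℝ) ≤ 1 - η := by linarith
    nlinarith [mul_nonneg (mul_nonneg h6 hs2.le) h5.le]
  nlinarith

lemma nuM_le_invl' {γ ℓ η : ℝ} (hγ : 0 < γ) (hℓ : 1 + Real.sqrt γ < ℓ) (hη : 0 < η)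
    (hη1 : η ≤ 1) : (TT γ ℓ η - SS γ ℓ η)/2 ≤ 1/ℓ := by
  have hl := one_lt_ell hγ hℓ
  have hl0 : 0 < ℓ := lt_trans one_pos hl
  have hq := q_invl η hγ hℓ
  have hS := SS_sq η hγ hℓ
  have hSn := SS_nonneg' γ ℓ η
  have hc2 := sq_nonneg (cP γ ℓ)
  have hprod : (1/ℓ - (TT γ ℓ η - SS γ ℓ η)/2) * (1/ℓ - (TT γ ℓ η + SS γ ℓ η)/2) ≤ 0 := by
    have heq : (1/ℓ - (TT γ ℓ η - SS γ ℓ η)/2) * (1/ℓ - (TT γ ℓ η + SS γ ℓ η)/2)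
        = 1/ℓ^2 - TT γ ℓ η * (1/ℓ) + η/ℓ := by
      linear_combination (-1/4) * hS
    rw [heq, hq]
    have h1 : 0 < 1 - 1/ℓ := by rw [sub_pos, div_lt_one hl0]; linarith
    have h2 : η - 1 ≤ 0 := by linarith
    have h3 : 0 < 1/ℓ := by positivity
    nlinarith [mul_nonneg (mul_nonneg hc2 h1.le) h3.le, h2]
  by_contra hcon
  push_neg at hcon
  nlinarith

lemma straddle {γ ℓ η : ℝ} (hγ : 0 < γ) (hℓ : 1 + Real.sqrt γ < ℓ) (hη1 : 1 ≤ η) :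
    (TT γ ℓ η - SS γ ℓ η)/2 ≤ 1 ∧ 1 ≤ (TT γ ℓ η + SS γ ℓ η)/2 := by
  have hl := one_lt_ell hγ hℓ
  have hl0 : 0 < ℓ := lt_trans one_pos hl
  have hq := q_one η hγ hℓ
  have hS := SS_sq η hγ hℓ
  have hSn := SS_nonneg' γ ℓ η
  have hs2 := sP_sq_pos hγ hℓ
  have hprod : (1 - (TT γ ℓ η - SS γ ℓ η)/2) * (1 - (TT γ ℓ η + SS γ ℓ η)/2) ≤ 0 := by
    have heq : (1 - (TT γ ℓ η - SS γ ℓ η)/2) * (1 - (TT γ ℓ η + SS γ ℓ η)/2)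
        = 1 - TT γ ℓ η + η/ℓ := by linear_combination (-1/4) * hS
    rw [heq, hq]
    have h1 : 0 < 1 - 1/ℓ := by rw [sub_pos, div_lt_one hl0]; linarith
    have h6 : 1 - η ≤ 0 := by linarith
    nlinarith [mul_pos hs2 h1, h6]
  constructor <;> nlinarith

lemma ratio_mono {γ ℓ : ℝ} (η₁ η₂ : ℝ) (hγ : 0 < γ) (hℓ : 1 + Real.sqrt γ < ℓ)
    (h1 : 0 < η₁) (h2 : 0 < η₂)
    (hcmp : (TT γ ℓ η₁)^2 * η₂ ≤ (TT γ ℓ η₂)^2 * η₁) :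
    (TT γ ℓ η₁ + SS γ ℓ η₁)/2 / ((TT γ ℓ η₁ - SS γ ℓ η₁)/2)
      ≤ (TT γ ℓ η₂ + SS γ ℓ η₂)/2 / ((TT γ ℓ η₂ - SS γ ℓ η₂)/2) := by
  have hl0 : 0 < ℓ := lt_trans one_pos (one_lt_ell hγ hℓ)
  have hT1 := TT_pos hγ hℓ h1
  have hT2 := TT_pos hγ hℓ h2
  have hS1 := SS_nonneg' γ ℓ η₁
  have hS2 := SS_nonneg' γ ℓ η₂
  have hSq1 := SS_sq η₁ hγ hℓ
  have hSq2 := SS_sq η₂ hγ hℓ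
  have hM1 : 0 < (TT γ ℓ η₁ - SS γ ℓ η₁)/2 := by have := SS_lt_TT hγ hℓ h1; linarith
  have hM2 : 0 < (TT γ ℓ η₂ - SS γ ℓ η₂)/2 := by have := SS_lt_TT hγ hℓ h2; linarith
  rw [div_le_div_iff₀ hM1 hM2]
  have hkey : SS γ ℓ η₁ * TT γ ℓ η₂ ≤ TT γ ℓ η₁ * SS γ ℓ η₂ := by
    have hsq : (SS γ ℓ η₁ * TT γ ℓ η₂)^2 ≤ (TT γ ℓ η₁ * SS γ ℓ η₂)^2 := by
      have e1 : (SS γ ℓ η₁ * TT γ ℓ η₂)^2 = ((TT γ ℓ η₁)^2 - 4*η₁/ℓ) * (TT γ ℓ η₂)^2 := by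
        rw [mul_pow, hSq1]
      have e2 : (TT γ ℓ η₁ * SS γ ℓ η₂)^2 = (TT γ ℓ η₁)^2 * ((TT γ ℓ η₂)^2 - 4*η₂/ℓ) := by
        rw [mul_pow, hSq2]
      rw [e1, e2]
      have : 4*η₂/ℓ * (TT γ ℓ η₁)^2 ≤ 4*η₁/ℓ * (TT γ ℓ η₂)^2 := by
        rw [div_mul_eq_mul_div, div_mul_eq_mul_div, div_le_div_iff₀ hl0 hl0]
        nlinarith
      nlinarith
    nlinarith [mul_nonneg hS1 hT2.le, mul_nonneg hT1.le hS2]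
  nlinarith

lemma TT_one {γ ℓ : ℝ} (hγ : 0 < γ) (hℓ : 1 + Real.sqrt γ < ℓ) : TT γ ℓ 1 = 1 + 1/ℓ := by
  have := hab hγ hℓ; unfold TT; linarith

lemma SS_one {γ ℓ : ℝ} (hγ : 0 < γ) (hℓ : 1 + Real.sqrt γ < ℓ) : SS γ ℓ 1 = 1 - 1/ℓ := by
  have hl := one_lt_ell hγ hℓ
  have hl0 : 0 < ℓ := lt_trans one_pos hl
  have h1 : 0 ≤ 1 - 1/ℓ := by rw [sub_nonneg, div_le_one hl0]; linarith
  rw [SS, TT_one hγ hℓ]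
  have h2 : (1 + 1/ℓ)^2 - 4*1/ℓ = (1 - 1/ℓ)^2 := by ring
  rw [h2, Real.sqrt_sq h1]

lemma part1 {γ : ℝ} (hγ : 0 < γ) : 1 + Real.sqrt γ < ellOnePlus γ := by
  have h1 : 2 * Real.sqrt γ ≤ Real.sqrt (γ^2 + 8*γ) := by
    rw [show (2:ℝ) * Real.sqrt γ = Real.sqrt (4*γ) by
      rw [show (4:ℝ)*γ = (2:ℝ)^2*γ by ring, Real.sqrt_mul (by norm_num) γ,
        Real.sqrt_sq (by norm_num : (0:ℝ) ≤ 2)]]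
    apply Real.sqrt_le_sqrt; nlinarith
  unfold ellOnePlus
  linarith

lemma sup_case {γ ℓ : ℝ} (hγ : 0 < γ) (h : ellOnePlus γ < ℓ) :
    γ * (ℓ + 1) < (ℓ - 1)^2 := by
  have hs : Real.sqrt (γ^2+8*γ) ^ 2 = γ^2+8*γ := Real.sq_sqrt (by nlinarith)
  have hsn : 0 ≤ Real.sqrt (γ^2+8*γ) := Real.sqrt_nonneg _
  unfold ellOnePlus at h
  nlinarith [h, hs, hsn]

lemma sub_case {γ ℓ : ℝ} (hγ : 0 < γ) (hℓ : 1 + Real.sqrt γ < ℓ) (h : ¬ ellOnePlus γ < ℓ) :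
    (ℓ - 1)^2 ≤ γ * (ℓ + 1) := by
  push_neg at h
  have hs : Real.sqrt (γ^2+8*γ) ^ 2 = γ^2+8*γ := Real.sq_sqrt (by nlinarith)
  have hsn : 0 ≤ Real.sqrt (γ^2+8*γ) := Real.sqrt_nonneg _
  have hm : 0 < ℓ - 1 := by have := Real.sqrt_nonneg γ; linarith
  unfold ellOnePlus at h
  by_cases hc : 2*(ℓ-1) - γ ≤ 0
  · nlinarith
  · push_neg at hc
    nlinarith

lemma b_sub_a {γ ℓ : ℝ} : bP γ ℓ - aP γ ℓ = ((cP γ ℓ)^2 - (sP γ ℓ)^2) * (1 - 1/ℓ) := by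
  unfold aP bP; ring

lemma a_le_b_sup {γ ℓ : ℝ} (hγ : 0 < γ) (hℓ : 1 + Real.sqrt γ < ℓ) (h : ellOnePlus γ < ℓ) :
    aP γ ℓ ≤ bP γ ℓ := by
  have hl := one_lt_ell hγ hℓ
  have hl0 : 0 < ℓ := lt_trans one_pos hl
  have hm : 0 < ℓ - 1 := by linarith
  have h1 : (sP γ ℓ)^2 ≤ (cP γ ℓ)^2 := by
    rw [cP_sq hγ hℓ, sP_sq_val hγ hℓ, div_le_div_iff₀ (by positivity) (by positivity)]
    have h0 := sup_case hγ h
    have hD : (0:ℝ) < (ℓ-1)*(ℓ-1+γ) := by positivity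
    apply mul_le_mul_of_nonneg_right _ hD.le
    nlinarith
  have h2 : 0 ≤ 1 - 1/ℓ := by rw [sub_nonneg, div_le_one hl0]; linarith
  nlinarith [b_sub_a (γ := γ) (ℓ := ℓ)]

lemma b_le_a_sub {γ ℓ : ℝ} (hγ : 0 < γ) (hℓ : 1 + Real.sqrt γ < ℓ) (h : ¬ ellOnePlus γ < ℓ) :
    bP γ ℓ ≤ aP γ ℓ := by
  have hl := one_lt_ell hγ hℓ
  have hl0 : 0 < ℓ := lt_trans one_pos hl
  have hm : 0 < ℓ - 1 := by linarith
  have h1 : (cP γ ℓ)^2 ≤ (sP γ ℓ)^2 := by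
    rw [cP_sq hγ hℓ, sP_sq_val hγ hℓ, div_le_div_iff₀ (by positivity) (by positivity)]
    have h0 := sub_case hγ hℓ h
    have hD : (0:ℝ) < (ℓ-1)*(ℓ-1+γ) := by positivity
    apply mul_le_mul_of_nonneg_right _ hD.le
    nlinarith
  have h2 : 0 ≤ 1 - 1/ℓ := by rw [sub_nonneg, div_le_one hl0]; linarith
  nlinarith [b_sub_a (γ := γ) (ℓ := ℓ)]

lemma eta1star_pos {γ ℓ : ℝ} (hγ : 0 < γ) (hℓ : 1 + Real.sqrt γ < ℓ) : 0 < eta1star γ ℓ := by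
  have hl := one_lt_ell hγ hℓ
  have hm : 0 < ℓ - 1 := by linarith
  unfold eta1star
  split
  · apply div_pos (by linarith)
    have : 0 < 2*γ/(ℓ-1) := by positivity
    linarith
  · norm_num

lemma a_mul_eta1star {γ ℓ : ℝ} (hγ : 0 < γ) (hℓ : 1 + Real.sqrt γ < ℓ) (h : ellOnePlus γ < ℓ) :
    aP γ ℓ * eta1star γ ℓ = bP γ ℓ := by
  have hl := one_lt_ell hγ hℓ
  have hl0 : 0 < ℓ := lt_trans one_pos hl
  have hm : 0 < ℓ - 1 := by linarith
  have hmg : 0 < ℓ - 1 + γ := by linarith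
  have hden : 0 < 1 + γ + 2*γ/(ℓ-1) := by positivity
  rw [eta1star, if_pos h]
  unfold aP bP
  rw [cP_sq hγ hℓ, sP_sq_val hγ hℓ]
  field_simp
  ring

/-- evaluation of the objective for η ≥ 1 -/
lemma Fval_ge {γ ℓ η : ℝ} (hγ : 0 < γ) (hℓ : 1 + Real.sqrt γ < ℓ) (hη1 : 1 ≤ η) :
    max 1 (nuP γ ℓ η) / min 1 (nuM γ ℓ η)
      = (TT γ ℓ η + SS γ ℓ η)/2 / ((TT γ ℓ η - SS γ ℓ η)/2) := by
  obtain ⟨hM, hP⟩ := straddle hγ hℓ hη1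
  rw [nuP_eq η hγ hℓ, nuM_eq η hγ hℓ, max_eq_right hP, min_eq_right hM]

/-- evaluation of the objective for 0 < η ≤ 1 -/
lemma Fval_le {γ ℓ η : ℝ} (hγ : 0 < γ) (hℓ : 1 + Real.sqrt γ < ℓ) (hη : 0 < η) (hη1 : η ≤ 1) :
    max 1 (nuP γ ℓ η) / min 1 (nuM γ ℓ η) = 1 / ((TT γ ℓ η - SS γ ℓ η)/2) := by
  have hP := nuP_le_one' hγ hℓ hη hη1
  have hSn := SS_nonneg' γ ℓ η
  rw [nuP_eq η hγ hℓ, nuM_eq η hγ hℓ, max_eq_left hP, min_eq_right (by linarith)]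

lemma F_one {γ ℓ : ℝ} (hγ : 0 < γ) (hℓ : 1 + Real.sqrt γ < ℓ) :
    (TT γ ℓ 1 + SS γ ℓ 1)/2 / ((TT γ ℓ 1 - SS γ ℓ 1)/2) = ℓ := by
  have hl0 : 0 < ℓ := lt_trans one_pos (one_lt_ell hγ hℓ)
  rw [TT_one hγ hℓ, SS_one hγ hℓ]
  field_simp
  ring

/-- `ℓ₁⁺(γ) > 1 + √γ`, and the single-spike shrinker `η₁*(ℓ;γ)`
minimizes the condition-number objective
`η ↦ max(1,ν₊(A(ℓ,η;γ)))/min(1,ν₋(A(ℓ,η;γ)))` over `η > 0`. -/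
theorem stmt2 (γ ℓ : ℝ) (hγ : 0 < γ) (hℓ : 1 + Real.sqrt γ < ℓ) :
    1 + Real.sqrt γ < ellOnePlus γ ∧
    ∀ η : ℝ, 0 < η →
      max 1 (nuP γ ℓ (eta1star γ ℓ)) / min 1 (nuM γ ℓ (eta1star γ ℓ))
        ≤ max 1 (nuP γ ℓ η) / min 1 (nuM γ ℓ η) := by
  refine ⟨part1 hγ, ?_⟩
  intro η hη
  have hl := one_lt_ell hγ hℓ
  have hl0 : 0 < ℓ := lt_trans one_pos hl
  have ha := aP_pos hγ hℓ
  have hb := bP_pos hγ hℓ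
  have hep := eta1star_pos hγ hℓ
  by_cases hc : ellOnePlus γ < ℓ
  · have he := a_mul_eta1star hγ hℓ hc
    have hab' := a_le_b_sup hγ hℓ hc
    have he1 : 1 ≤ eta1star γ ℓ := by nlinarith
    have hTe : TT γ ℓ (eta1star γ ℓ) = 2 * bP γ ℓ := by
      unfold TT; linear_combination he
    rw [Fval_ge hγ hℓ he1]
    rcases le_or_gt 1 η with hη1 | hη1
    · rw [Fval_ge hγ hℓ hη1]
      apply ratio_mono _ _ hγ hℓ hep hη
      rw [hTe, show TT γ ℓ η = η * aP γ ℓ + bP γ ℓ from rfl]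
      have hkey : aP γ ℓ * ((2 * bP γ ℓ)^2 * η)
          ≤ aP γ ℓ * ((η * aP γ ℓ + bP γ ℓ)^2 * eta1star γ ℓ) := by
        have h2 : aP γ ℓ * ((η * aP γ ℓ + bP γ ℓ)^2 * eta1star γ ℓ)
            = (η * aP γ ℓ + bP γ ℓ)^2 * bP γ ℓ := by
          linear_combination ((η * aP γ ℓ + bP γ ℓ)^2) * he
        rw [h2]
        nlinarith [sq_nonneg (η * aP γ ℓ - bP γ ℓ)]
      exact le_of_mul_le_mul_left hkey ha
    · rw [Fval_le hγ hℓ hη hη1.le]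
      have step1 : (TT γ ℓ (eta1star γ ℓ) + SS γ ℓ (eta1star γ ℓ))/2
            / ((TT γ ℓ (eta1star γ ℓ) - SS γ ℓ (eta1star γ ℓ))/2)
          ≤ (TT γ ℓ 1 + SS γ ℓ 1)/2 / ((TT γ ℓ 1 - SS γ ℓ 1)/2) := by
        apply ratio_mono _ _ hγ hℓ hep one_pos
        have h3 := hab hγ hℓ
        rw [hTe, TT_one hγ hℓ]
        have hkey : aP γ ℓ * ((2 * bP γ ℓ)^2 * 1)
            ≤ aP γ ℓ * ((1 + 1/ℓ)^2 * eta1star γ ℓ) := by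
          have h2 : aP γ ℓ * ((1 + 1/ℓ)^2 * eta1star γ ℓ) = (1 + 1/ℓ)^2 * bP γ ℓ := by
            linear_combination ((1 + 1/ℓ)^2) * he
          rw [h2, ← h3]
          nlinarith [sq_nonneg (aP γ ℓ - bP γ ℓ)]
        exact le_of_mul_le_mul_left hkey ha
      have hM := nuM_le_invl' hγ hℓ hη hη1.le
      have hMpos : 0 < (TT γ ℓ η - SS γ ℓ η)/2 := by
        have := SS_lt_TT hγ hℓ hη; linarith
      refine le_trans (le_trans step1 (le_of_eq (F_one hγ hℓ))) ?_
      rw [le_div_iff₀ hMpos]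
      calc ℓ * ((TT γ ℓ η - SS γ ℓ η)/2) ≤ ℓ * (1/ℓ) :=
            mul_le_mul_of_nonneg_left hM hl0.le
        _ = 1 := by field_simp
  · have he : eta1star γ ℓ = 1 := by rw [eta1star, if_neg hc]
    rw [he]
    rcases le_or_gt 1 η with hη1 | hη1
    · rw [Fval_ge hγ hℓ le_rfl, Fval_ge hγ hℓ hη1]
      apply ratio_mono 1 η hγ hℓ one_pos hη
      have hba := b_le_a_sub hγ hℓ hc
      rw [show TT γ ℓ 1 = 1 * aP γ ℓ + bP γ ℓ from rfl,
        show TT γ ℓ η = η * aP γ ℓ + bP γ ℓ from rfl]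
      have h4 : 0 ≤ (η - 1) * (η * (aP γ ℓ)^2 - (bP γ ℓ)^2) := by
        apply mul_nonneg (by linarith)
        nlinarith
      nlinarith [h4]
    · rw [Fval_ge hγ hℓ le_rfl, Fval_le hγ hℓ hη hη1.le, F_one hγ hℓ]
      have hM := nuM_le_invl' hγ hℓ hη hη1.le
      have hMpos : 0 < (TT γ ℓ η - SS γ ℓ η)/2 := by
        have := SS_lt_TT hγ hℓ hη; linarith
      rw [le_div_iff₀ hMpos]
      calc ℓ * ((TT γ ℓ η - SS γ ℓ η)/2) ≤ ℓ * (1/ℓ) :=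
            mul_le_mul_of_nonneg_left hM hl0.le
        _ = 1 := by field_simp
end

section
/- Fix γ > 0. As ℓ → ∞: (i) η₁*(ℓ;γ)/ℓ → 1/(1+γ); (ii) κ₁*(ℓ;γ) → (1 + sqrt(γ/(γ+1)))/(1 − sqrt(γ/(γ+1))); and moreover (iii) ν₊(A(ℓ, η₁*(ℓ;γ); γ)) → 1 + sqrt(γ/(γ+1)) and ν₋(A(ℓ, η₁*(ℓ;γ); γ)) → 1 − sqrt(γ/(γ+1)). -/
open Real Matrix

noncomputable def spec2aux_c2F (γ t : ℝ) : ℝ := (1 - γ*t^2)/(1+γ*t)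
noncomputable def spec2aux_etaF (γ t : ℝ) : ℝ := 1/(1+γ+2*γ*t)
noncomputable def spec2aux_ls2F (γ t : ℝ) : ℝ := γ*(1+t)^2/(1+γ*t)
noncomputable def spec2aux_em1F (γ t : ℝ) : ℝ := spec2aux_etaF γ t - t/(1+t)
noncomputable def spec2aux_aF (γ t : ℝ) : ℝ :=
  spec2aux_etaF γ t * spec2aux_c2F γ t + spec2aux_ls2F γ t * (t/(1+t))^2
noncomputable def spec2aux_bF (γ t : ℝ) : ℝ :=
  Real.sqrt (spec2aux_c2F γ t) * Real.sqrt ((spec2aux_em1F γ t)^2 * spec2aux_ls2F γ t)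
noncomputable def spec2aux_dF (γ t : ℝ) : ℝ :=
  spec2aux_c2F γ t + spec2aux_etaF γ t * spec2aux_ls2F γ t
noncomputable def spec2aux_nuPF (γ t : ℝ) : ℝ :=
  ((spec2aux_aF γ t + spec2aux_dF γ t) +
    Real.sqrt ((spec2aux_aF γ t - spec2aux_dF γ t)^2 + 4*(spec2aux_bF γ t)^2))/2
noncomputable def spec2aux_nuMF (γ t : ℝ) : ℝ :=
  ((spec2aux_aF γ t + spec2aux_dF γ t) -
    Real.sqrt ((spec2aux_aF γ t - spec2aux_dF γ t)^2 + 4*(spec2aux_bF γ t)^2))/2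

lemma spec2_set (a b d : ℝ) :
    spectrum ℝ (!![a,b;b,d]) =
      {((a+d) - Real.sqrt ((a-d)^2 + 4*b^2))/2, ((a+d) + Real.sqrt ((a-d)^2 + 4*b^2))/2} := by
  have hD : Real.sqrt ((a-d)^2 + 4*b^2) ^ 2 = (a-d)^2 + 4*b^2 :=
    Real.sq_sqrt (by positivity)
  ext x
  have hmem : x ∈ spectrum ℝ (!![a,b;b,d]) ↔ (x - a) * (x - d) - b * b = 0 := by
    rw [spectrum.mem_iff, Matrix.isUnit_iff_isUnit_det, isUnit_iff_ne_zero, not_ne_iff]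
    have : (algebraMap ℝ (Matrix (Fin 2) (Fin 2) ℝ)) x - !![a,b;b,d] = !![x - a, -b; -b, x - d] := by
      rw [Matrix.algebraMap_eq_diagonal]
      ext i j; fin_cases i <;> fin_cases j <;> simp [Matrix.diagonal]
    rw [this, Matrix.det_fin_two_of]
    constructor <;> intro h <;> nlinarith [h]
  rw [hmem]
  have key : (x - a) * (x - d) - b * b =
      (x - ((a+d) - Real.sqrt ((a-d)^2 + 4*b^2))/2) *
      (x - ((a+d) + Real.sqrt ((a-d)^2 + 4*b^2))/2) := by nlinarith [hD]
  rw [key, mul_eq_zero, Set.mem_insert_iff, Set.mem_singleton_iff]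
  constructor <;> rintro (h | h) <;> [left; right; left; right] <;> linarith

lemma sSup_spec2 (a b d : ℝ) :
    sSup (spectrum ℝ (!![a,b;b,d])) = ((a+d) + Real.sqrt ((a-d)^2 + 4*b^2))/2 := by
  rw [spec2_set, csSup_pair]
  exact sup_eq_right.mpr (by have := Real.sqrt_nonneg ((a-d)^2 + 4*b^2); linarith)

lemma sInf_spec2 (a b d : ℝ) :
    sInf (spectrum ℝ (!![a,b;b,d])) = ((a+d) - Real.sqrt ((a-d)^2 + 4*b^2))/2 := by
  rw [spec2_set, csInf_pair]
  exact inf_eq_left.mpr (by have := Real.sqrt_nonneg ((a-d)^2 + 4*b^2); linarith)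

lemma spec2_main_ev (γ ℓ : ℝ) (hγ : 0 < γ)
    (h1 : 1 + Real.sqrt γ < ℓ) (h2 : ellOnePlus γ < ℓ) (h3 : 2 < ℓ) (h4 : 1 + 3*γ ≤ ℓ) :
    nuP γ ℓ (eta1star γ ℓ) = spec2aux_nuPF γ ((ℓ-1)⁻¹) ∧
    nuM γ ℓ (eta1star γ ℓ) = spec2aux_nuMF γ ((ℓ-1)⁻¹) ∧
    eta1star γ ℓ / ℓ = spec2aux_etaF γ ((ℓ-1)⁻¹) := by
  set t : ℝ := (ℓ - 1)⁻¹ with ht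
  have hℓ1 : (0:ℝ) < ℓ - 1 := by linarith
  have hℓ0 : (0:ℝ) < ℓ := by linarith
  have ht0 : 0 < t := by positivity
  have ht1 : t < 1 := by rw [ht, inv_lt_one_iff₀]; right; linarith
  have hγt : (0:ℝ) < 1 + γ*t := by positivity
  have hden2 : (0:ℝ) < 1 + γ + 2*γ*t := by positivity
  have hnum : 0 < 1 - γ*t^2 := by
    have h5 : √γ < ℓ - 1 := by linarith
    have h6 : γ < (ℓ-1)^2 := by nlinarith [Real.sqrt_nonneg γ, Real.sq_sqrt hγ.le]
    have : γ * t^2 < 1 := by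
      rw [ht, inv_pow, mul_inv_lt_iff₀ (by positivity)]; linarith
    linarith
  have hc2nn : 0 ≤ spec2aux_c2F γ t := by unfold spec2aux_c2F; positivity
  have hc2le : spec2aux_c2F γ t ≤ 1 := by
    unfold spec2aux_c2F; rw [div_le_one hγt]; nlinarith
  have hcc : cP γ ℓ = Real.sqrt (spec2aux_c2F γ t) := by
    rw [cP, if_pos h1]; congr 1
    unfold spec2aux_c2F; rw [ht]; field_simp
  have hc2 : cP γ ℓ ^ 2 = spec2aux_c2F γ t := by rw [hcc, Real.sq_sqrt hc2nn]
  have hss : sP γ ℓ = Real.sqrt (1 - spec2aux_c2F γ t) := by rw [sP, hc2]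
  have hs2 : sP γ ℓ ^ 2 = 1 - spec2aux_c2F γ t := by
    rw [hss, Real.sq_sqrt (by linarith)]
  have hη : eta1star γ ℓ = ℓ * spec2aux_etaF γ t := by
    rw [eta1star, if_pos h2]
    unfold spec2aux_etaF; rw [ht]; field_simp
  have hinv : (1:ℝ)/ℓ = t/(1+t) := by rw [ht]; field_simp; ring
  have hls2 : spec2aux_ls2F γ t = ℓ * (1 - spec2aux_c2F γ t) := by
    unfold spec2aux_ls2F spec2aux_c2F; rw [ht]; field_simp; ring
  have hedef : spec2aux_em1F γ t = (ℓ * spec2aux_etaF γ t - 1)/ℓ := by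
    unfold spec2aux_em1F; rw [← hinv]; field_simp
  have hη1 : 1 ≤ ℓ * spec2aux_etaF γ t := by
    unfold spec2aux_etaF
    rw [mul_one_div, le_div_iff₀ hden2]; nlinarith
  have h11 : (eta1star γ ℓ * cP γ ℓ ^ 2 + sP γ ℓ ^ 2) / ℓ = spec2aux_aF γ t := by
    rw [hη, hc2, hs2]
    unfold spec2aux_aF
    rw [hls2, ← hinv]; field_simp
  have h22 : cP γ ℓ ^ 2 + eta1star γ ℓ * sP γ ℓ ^ 2 = spec2aux_dF γ t := by
    rw [hη, hc2, hs2]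
    unfold spec2aux_dF
    rw [hls2]; ring
  have h12 : (eta1star γ ℓ - 1) * cP γ ℓ * sP γ ℓ / Real.sqrt ℓ = spec2aux_bF γ t := by
    have hsl : (0:ℝ) < Real.sqrt ℓ := Real.sqrt_pos.mpr hℓ0
    have key : (spec2aux_em1F γ t)^2 * spec2aux_ls2F γ t =
        ((ℓ * spec2aux_etaF γ t - 1) * Real.sqrt (1 - spec2aux_c2F γ t) / Real.sqrt ℓ)^2 := by
      rw [div_pow, mul_pow, Real.sq_sqrt (by linarith : (0:ℝ) ≤ 1 - spec2aux_c2F γ t),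
        Real.sq_sqrt hℓ0.le, hedef, hls2]
      field_simp
    rw [spec2aux_bF, key, Real.sqrt_sq (div_nonneg (mul_nonneg (by linarith) (Real.sqrt_nonneg _)) (Real.sqrt_nonneg _)), hη, hcc, hss]
    ring
  have hA : Amat γ ℓ (eta1star γ ℓ) =
      !![spec2aux_aF γ t, spec2aux_bF γ t; spec2aux_bF γ t, spec2aux_dF γ t] := by
    rw [Amat, h11, h12, h22]
  refine ⟨?_, ?_, ?_⟩
  · rw [nuP, hA, sSup_spec2]; rfl
  · rw [nuM, hA, sInf_spec2]; rfl
  · rw [hη]; field_simp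

lemma cont_all (γ : ℝ) (hγ : 0 < γ) :
    ContinuousAt (spec2aux_nuPF γ) 0 ∧ ContinuousAt (spec2aux_nuMF γ) 0 ∧
    ContinuousAt (spec2aux_etaF γ) 0 := by
  have h1 : ContinuousAt (spec2aux_c2F γ) 0 := by
    apply ContinuousAt.div (by fun_prop) (by fun_prop); norm_num
  have h2 : ContinuousAt (spec2aux_etaF γ) 0 := by
    apply ContinuousAt.div (by fun_prop) (by fun_prop); norm_num; positivity
  have h3 : ContinuousAt (spec2aux_ls2F γ) 0 := by
    apply ContinuousAt.div (by fun_prop) (by fun_prop); norm_num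
  have h4 : ContinuousAt (fun t : ℝ => t/(1+t)) 0 := by
    apply ContinuousAt.div (by fun_prop) (by fun_prop); norm_num
  have h5 : ContinuousAt (spec2aux_em1F γ) 0 := h2.sub h4
  have h6 : ContinuousAt (spec2aux_aF γ) 0 := (h2.mul h1).add (h3.mul (h4.pow 2))
  have h7 : ContinuousAt (spec2aux_bF γ) 0 :=
    ((Real.continuous_sqrt.continuousAt).comp h1).mul
      ((Real.continuous_sqrt.continuousAt).comp ((h5.pow 2).mul h3))
  have h8 : ContinuousAt (spec2aux_dF γ) 0 := h1.add (h2.mul h3)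
  refine ⟨?_, ?_, h2⟩
  · exact (((h6.add h8).add ((Real.continuous_sqrt.continuousAt).comp
      (((h6.sub h8).pow 2).add ((continuousAt_const).mul (h7.pow 2))))).div_const 2)
  · exact (((h6.add h8).sub ((Real.continuous_sqrt.continuousAt).comp
      (((h6.sub h8).pow 2).add ((continuousAt_const).mul (h7.pow 2))))).div_const 2)

lemma vals_at_zero (γ : ℝ) (hγ : 0 < γ) :
    spec2aux_nuPF γ 0 = 1 + Real.sqrt (γ/(γ+1)) ∧
    spec2aux_nuMF γ 0 = 1 - Real.sqrt (γ/(γ+1)) ∧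
    spec2aux_etaF γ 0 = 1/(1+γ) := by
  have hγ1 : (0:ℝ) < 1 + γ := by linarith
  have hc : spec2aux_c2F γ 0 = 1 := by unfold spec2aux_c2F; norm_num
  have he : spec2aux_etaF γ 0 = 1/(1+γ) := by unfold spec2aux_etaF; norm_num
  have hl : spec2aux_ls2F γ 0 = γ := by unfold spec2aux_ls2F; norm_num
  have hm : spec2aux_em1F γ 0 = 1/(1+γ) := by unfold spec2aux_em1F; rw [he]; norm_num
  have ha : spec2aux_aF γ 0 = 1/(1+γ) := by
    unfold spec2aux_aF; rw [hc, he, hl]; norm_num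
  have hd : spec2aux_dF γ 0 = 1 + γ/(1+γ) := by
    unfold spec2aux_dF; rw [hc, he, hl]; ring
  have hb2 : (spec2aux_bF γ 0)^2 = γ/(1+γ)^2 := by
    rw [spec2aux_bF, mul_pow, Real.sq_sqrt (by rw [hc]; norm_num),
      Real.sq_sqrt (by rw [hm, hl]; positivity), hc, hm, hl]
    field_simp
  have hsum : spec2aux_aF γ 0 + spec2aux_dF γ 0 = 2 := by
    rw [ha, hd]; field_simp; ring
  have hdisc : (spec2aux_aF γ 0 - spec2aux_dF γ 0)^2 + 4*(spec2aux_bF γ 0)^2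
      = 2^2 * (γ/(γ+1)) := by
    rw [ha, hd, hb2]; field_simp; ring
  have hsq : Real.sqrt ((spec2aux_aF γ 0 - spec2aux_dF γ 0)^2 + 4*(spec2aux_bF γ 0)^2)
      = 2 * Real.sqrt (γ/(γ+1)) := by
    rw [hdisc, Real.sqrt_mul (by norm_num), Real.sqrt_sq (by norm_num)]
  refine ⟨?_, ?_, he⟩
  · rw [spec2aux_nuPF, hsum, hsq]; ring
  · rw [spec2aux_nuMF, hsum, hsq]; ring

/-- large-`ℓ` asymptotics of the optimal single-spike shrinker,
the optimal loss and the extreme eigenvalues. -/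

theorem stmt5 (γ : ℝ) (hγ : 0 < γ) :
    Filter.Tendsto (fun ℓ => eta1star γ ℓ / ℓ) Filter.atTop (nhds (1 / (1 + γ))) ∧
    Filter.Tendsto (fun ℓ => kappa1star γ ℓ) Filter.atTop
      (nhds ((1 + Real.sqrt (γ / (γ + 1))) / (1 - Real.sqrt (γ / (γ + 1))))) ∧
    Filter.Tendsto (fun ℓ => nuP γ ℓ (eta1star γ ℓ)) Filter.atTop
      (nhds (1 + Real.sqrt (γ / (γ + 1)))) ∧
    Filter.Tendsto (fun ℓ => nuM γ ℓ (eta1star γ ℓ)) Filter.atTop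
      (nhds (1 - Real.sqrt (γ / (γ + 1)))) := by
  have htt : Filter.Tendsto (fun ℓ : ℝ => (ℓ-1)⁻¹) Filter.atTop (nhds 0) := by
    apply tendsto_inv_atTop_zero.comp
    simpa [sub_eq_add_neg] using Filter.tendsto_atTop_add_const_right Filter.atTop (-1 : ℝ) Filter.tendsto_id
  have hev : ∀ᶠ ℓ : ℝ in Filter.atTop,
      1 + Real.sqrt γ < ℓ ∧ ellOnePlus γ < ℓ ∧ 2 < ℓ ∧ 1 + 3*γ ≤ ℓ := by
    filter_upwards [Filter.eventually_gt_atTop (1 + Real.sqrt γ),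
      Filter.eventually_gt_atTop (ellOnePlus γ), Filter.eventually_gt_atTop (2:ℝ),
      Filter.eventually_ge_atTop (1 + 3*γ)] with ℓ a b c d
    exact ⟨a, b, c, d⟩
  have hP : Filter.Tendsto (fun ℓ => nuP γ ℓ (eta1star γ ℓ)) Filter.atTop
      (nhds (1 + Real.sqrt (γ / (γ + 1)))) := by
    have h := ((cont_all γ hγ).1.tendsto).comp htt
    rw [(vals_at_zero γ hγ).1] at h
    exact h.congr' (hev.mono fun ℓ ⟨a, b, c, d⟩ =>
      ((spec2_main_ev γ ℓ hγ a b c d).1).symm)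
  have hM : Filter.Tendsto (fun ℓ => nuM γ ℓ (eta1star γ ℓ)) Filter.atTop
      (nhds (1 - Real.sqrt (γ / (γ + 1)))) := by
    have h := ((cont_all γ hγ).2.1.tendsto).comp htt
    rw [(vals_at_zero γ hγ).2.1] at h
    exact h.congr' (hev.mono fun ℓ ⟨a, b, c, d⟩ =>
      ((spec2_main_ev γ ℓ hγ a b c d).2.1).symm)
  have hE : Filter.Tendsto (fun ℓ => eta1star γ ℓ / ℓ) Filter.atTop (nhds (1 / (1 + γ))) := by
    have h := ((cont_all γ hγ).2.2.tendsto).comp htt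
    rw [(vals_at_zero γ hγ).2.2] at h
    exact h.congr' (hev.mono fun ℓ ⟨a, b, c, d⟩ =>
      ((spec2_main_ev γ ℓ hγ a b c d).2.2).symm)
  have hne : 1 - Real.sqrt (γ / (γ + 1)) ≠ 0 := by
    have h1 : Real.sqrt (γ / (γ + 1)) < 1 := by
      calc Real.sqrt (γ / (γ + 1)) < Real.sqrt 1 :=
            Real.sqrt_lt_sqrt (by positivity) (by rw [div_lt_one (by linarith)]; linarith)
        _ = 1 := Real.sqrt_one
    linarith
  exact ⟨hE, hP.div hM hne, hP, hM⟩
end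

section
/- Let γ_m* = (√5 − 1)/2. For every γ > γ_m*, the function ℓ ↦ ν₋(A(ℓ, η₁*(ℓ;γ); γ)) is nonincreasing on ℓ > 1, and ν₋(A(ℓ, η₁*(ℓ;γ); γ)) ≥ 1 − sqrt(γ/(γ+1)) for every ℓ > 1. -/
open Real Matrix

set_option maxHeartbeats 1000000

noncomputable def Gf (γ ℓ : ℝ) : ℝ :=
  (ℓ-1)/((ℓ-1)+γ) - Real.sqrt (((ℓ-1)/((ℓ-1)+γ))^2 - (ℓ-1)/((1+γ)*(ℓ-1)+2*γ))

section Aux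
open Filter Topology

lemma spec_sym (a b d : ℝ) :
    spectrum ℝ !![a, b; b, d] =
      {((a + d) - Real.sqrt ((a - d) ^ 2 + 4 * b ^ 2)) / 2,
       ((a + d) + Real.sqrt ((a - d) ^ 2 + 4 * b ^ 2)) / 2} := by
  have hD : 0 ≤ (a - d) ^ 2 + 4 * b ^ 2 := by positivity
  have hs : (Real.sqrt ((a - d) ^ 2 + 4 * b ^ 2)) ^ 2 = (a - d) ^ 2 + 4 * b ^ 2 :=
    Real.sq_sqrt hD
  ext x
  rw [spectrum.mem_iff, Matrix.isUnit_iff_isUnit_det]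
  have he : (algebraMap ℝ (Matrix (Fin 2) (Fin 2) ℝ)) x - !![a, b; b, d]
      = !![x - a, -b; -b, x - d] := by
    rw [Algebra.algebraMap_eq_smul_one]
    ext i j
    fin_cases i <;> fin_cases j <;>
      simp [Matrix.smul_apply, Matrix.one_apply]
  rw [he, Matrix.det_fin_two_of, isUnit_iff_ne_zero, not_not,
    Set.mem_insert_iff, Set.mem_singleton_iff]
  constructor
  · intro h
    have h2 : (x - ((a + d) - Real.sqrt ((a - d) ^ 2 + 4 * b ^ 2)) / 2) *
        (x - ((a + d) + Real.sqrt ((a - d) ^ 2 + 4 * b ^ 2)) / 2) = 0 := by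
      nlinarith [hs]
    rcases mul_eq_zero.1 h2 with h3 | h3
    · left; linarith
    · right; linarith
  · rintro (h | h) <;> subst h <;> nlinarith [hs]

lemma sInf_spec_sym (a b d : ℝ) :
    sInf (spectrum ℝ !![a, b; b, d]) =
      ((a + d) - Real.sqrt ((a - d) ^ 2 + 4 * b ^ 2)) / 2 := by
  rw [spec_sym, csInf_pair]
  have : Real.sqrt ((a - d) ^ 2 + 4 * b ^ 2) ≥ 0 := Real.sqrt_nonneg _
  rw [inf_eq_left]
  linarith

lemma sqgam_lt (hγ : 0 < γ) (hℓ : 1 + Real.sqrt γ < ℓ) : γ < (ℓ - 1)^2 := by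
  have h0 : Real.sqrt γ < ℓ - 1 := by linarith
  have h1 : (Real.sqrt γ)^2 < (ℓ-1)^2 := by
    apply sq_lt_sq' _ h0
    have := Real.sqrt_nonneg γ; linarith
  rwa [Real.sq_sqrt hγ.le] at h1

lemma c2_eq (hγ : 0 < γ) (hℓ : 1 + Real.sqrt γ < ℓ) :
    (cP γ ℓ)^2 = ((ℓ-1)^2 - γ)/((ℓ-1)*((ℓ-1)+γ)) := by
  have h1 : (1:ℝ) < ℓ := by have := Real.sqrt_nonneg γ; linarith
  have ht : (0:ℝ) < ℓ - 1 := by linarith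
  have h2 := sqgam_lt hγ hℓ
  rw [cP, if_pos hℓ, Real.sq_sqrt]
  · field_simp
  · apply div_nonneg
    · rw [sub_nonneg, div_le_one (by positivity)]; linarith
    · have : 0 ≤ γ / (ℓ - 1) := by positivity
      linarith

lemma c2_le_one (hγ : 0 < γ) (hℓ1 : 1 < ℓ) : (cP γ ℓ)^2 ≤ 1 := by
  by_cases hℓ : 1 + Real.sqrt γ < ℓ
  · rw [c2_eq hγ hℓ]
    have ht : (0:ℝ) < ℓ - 1 := by linarith
    rw [div_le_one (by positivity)]
    nlinarith
  · rw [cP, if_neg hℓ]; norm_num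

lemma s2_eq_gen (hγ : 0 < γ) (hℓ1 : 1 < ℓ) : (sP γ ℓ)^2 = 1 - (cP γ ℓ)^2 := by
  rw [sP, Real.sq_sqrt]
  linarith [c2_le_one hγ hℓ1]

lemma s2_eq (hγ : 0 < γ) (hℓ : 1 + Real.sqrt γ < ℓ) :
    (sP γ ℓ)^2 = γ*ℓ/((ℓ-1)*((ℓ-1)+γ)) := by
  have h1 : (1:ℝ) < ℓ := by have := Real.sqrt_nonneg γ; linarith
  have ht : (0:ℝ) < ℓ - 1 := by linarith
  rw [s2_eq_gen hγ h1, c2_eq hγ hℓ]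
  field_simp
  ring

lemma sqgam_le_ell1 (hγ : 0 < γ) : 1 + Real.sqrt γ < ellOnePlus γ := by
  rw [ellOnePlus]
  have h1 : Real.sqrt (4*γ) ≤ Real.sqrt (γ^2 + 8*γ) := by
    apply Real.sqrt_le_sqrt; nlinarith
  have h2 : Real.sqrt (4*γ) = 2 * Real.sqrt γ := by
    rw [show (4:ℝ)*γ = 2^2*γ by ring, Real.sqrt_mul (by norm_num),
      Real.sqrt_sq (by norm_num : (0:ℝ) ≤ 2)]
  nlinarith [Real.sqrt_nonneg γ]


lemma nuM_low (hγ : 0 < γ) (h1 : 1 < ℓ) (h2 : ¬ (ellOnePlus γ < ℓ)) :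
    nuM γ ℓ (eta1star γ ℓ) = 1/ℓ := by
  have hℓ0 : (0:ℝ) < ℓ := by linarith
  have hcs : (cP γ ℓ)^2 + (sP γ ℓ)^2 = 1 := by
    rw [s2_eq_gen hγ h1]; ring
  have hA : Amat γ ℓ (eta1star γ ℓ) = !![1/ℓ, 0; 0, 1] := by
    rw [eta1star, if_neg h2, Amat]
    have e1 : ((1:ℝ) * (cP γ ℓ)^2 + (sP γ ℓ)^2)/ℓ = 1/ℓ := by rw [one_mul, hcs]
    have e2 : ((1:ℝ) - 1) * cP γ ℓ * sP γ ℓ / Real.sqrt ℓ = 0 := by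
      norm_num
    have e3 : (cP γ ℓ)^2 + (1:ℝ) * (sP γ ℓ)^2 = 1 := by rw [one_mul, hcs]
    rw [e1, e2, e3]
  rw [nuM, hA, sInf_spec_sym]
  have h4 : Real.sqrt ((1/ℓ - 1)^2 + 4*0^2) = 1 - 1/ℓ := by
    rw [show (1/ℓ - 1)^2 + 4*(0:ℝ)^2 = (1 - 1/ℓ)^2 by ring]
    rw [Real.sqrt_sq]
    rw [sub_nonneg]
    rw [div_le_one hℓ0]; linarith
  rw [h4]; ring

lemma nuM_high (hγ : 0 < γ) (h2 : ellOnePlus γ < ℓ) :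
    nuM γ ℓ (eta1star γ ℓ) = Gf γ ℓ := by
  have hsg : 1 + Real.sqrt γ < ℓ := lt_trans (sqgam_le_ell1 hγ) h2
  have h1 : (1:ℝ) < ℓ := by have := Real.sqrt_nonneg γ; linarith
  have ht : (0:ℝ) < ℓ - 1 := by linarith
  have hℓ0 : (0:ℝ) < ℓ := by linarith
  have hE : (0:ℝ) < (1+γ)*(ℓ-1)+2*γ := by nlinarith
  have hη : eta1star γ ℓ = ℓ*(ℓ-1)/((1+γ)*(ℓ-1)+2*γ) := by
    rw [eta1star, if_pos h2]
    field_simp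
  have hc2 := c2_eq hγ hsg
  have hs2 := s2_eq hγ hsg
  set a := (eta1star γ ℓ * (cP γ ℓ) ^ 2 + (sP γ ℓ) ^ 2) / ℓ with ha
  set b := (eta1star γ ℓ - 1) * cP γ ℓ * sP γ ℓ / Real.sqrt ℓ with hb
  set d := (cP γ ℓ) ^ 2 + eta1star γ ℓ * (sP γ ℓ) ^ 2 with hd
  have hb2 : b^2 = (eta1star γ ℓ - 1)^2 * (cP γ ℓ)^2 * (sP γ ℓ)^2 / ℓ := by
    rw [hb, div_pow, Real.sq_sqrt hℓ0.le]; ring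
  have I1 : a + d = 2*(ℓ-1)/((ℓ-1)+γ) := by
    rw [ha, hd, hη, hc2, hs2]
    field_simp
    ring
  have I2 : a*d - b^2 = (ℓ-1)/((1+γ)*(ℓ-1)+2*γ) := by
    rw [ha, hd, hb2, hη, hc2, hs2]
    field_simp
    ring
  have I3 : (a-d)^2 + 4*b^2 = 4*(((ℓ-1)/((ℓ-1)+γ))^2 - (ℓ-1)/((1+γ)*(ℓ-1)+2*γ)) := by
    have : (a-d)^2 + 4*b^2 = (a+d)^2 - 4*(a*d - b^2) := by ring
    rw [this, I1, I2]
    ring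
  have I4 : Real.sqrt ((a-d)^2 + 4*b^2)
      = 2 * Real.sqrt (((ℓ-1)/((ℓ-1)+γ))^2 - (ℓ-1)/((1+γ)*(ℓ-1)+2*γ)) := by
    rw [I3, show (4:ℝ)*(((ℓ-1)/((ℓ-1)+γ))^2 - (ℓ-1)/((1+γ)*(ℓ-1)+2*γ))
      = 2^2*(((ℓ-1)/((ℓ-1)+γ))^2 - (ℓ-1)/((1+γ)*(ℓ-1)+2*γ)) by ring,
      Real.sqrt_mul (by norm_num), Real.sqrt_sq (by norm_num : (0:ℝ) ≤ 2)]
  have : nuM γ ℓ (eta1star γ ℓ) = ((a + d) - Real.sqrt ((a-d)^2 + 4*b^2))/2 := by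
    rw [nuM, Amat, ← ha, ← hb, ← hd, sInf_spec_sym]
  rw [this, I1, I4, Gf]
  ring


-- polynomial lemmas
lemma poly1 {γ t : ℝ} (hγ : 0 < γ) (ht : 0 < t) (h : γ*t + 2*γ ≤ t^2) :
    (t+γ)^3 ≤ t*((1+γ)*t+2*γ)^2 := by
  have hg : γ < t^2 := by nlinarith
  nlinarith [mul_pos ht hγ, sq_nonneg t, sq_nonneg (t-γ), mul_pos (mul_pos ht ht) hγ,
    mul_lt_mul_of_pos_left hg (mul_pos hγ hγ)]

lemma poly2 {γ t : ℝ} (hγ : 0 < γ) (ht : 0 < t) (hK : 1 ≤ γ^2 + γ) :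
    (1-γ)*t^2*((1+γ)*t+2*γ)^2 ≤ (t+γ)^4 := by
  set E := (1+γ)*t+2*γ with hE
  have hEpos : 0 < E := by rw [hE]; nlinarith
  rcases le_or_gt 1 γ with h1 | h1
  · have : (1-γ)*t^2*E^2 ≤ 0 := by
      apply mul_nonpos_of_nonpos_of_nonneg
      · apply mul_nonpos_of_nonpos_of_nonneg (by linarith) (sq_nonneg t)
      · exact sq_nonneg E
    nlinarith [sq_nonneg ((t+γ)^2)]
  · set d := γ^2 + γ - 1 with hd
    have hd0 : 0 ≤ d := by rw [hd]; linarith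
    have hf : -(d*t^2) ≤ (t+γ)^2 - γ*t*E := by
      have : (t+γ)^2 - γ*t*E + d*t^2 = 2*γ*(1-γ)*t + γ^2 := by rw [hE, hd]; ring
      nlinarith [mul_pos hγ ht]
    have hg : 0 ≤ (t+γ)^2 + γ*t*E := by positivity
    have hEg : (t+γ)^2 + γ*t*E ≤ E^2 := by
      have : E^2 - ((t+γ)^2 + γ*t*E) = γ*t^2 + 2*γ*(1+γ)*t + 3*γ^2 := by rw [hE]; ring
      nlinarith [mul_pos hγ ht, mul_pos hγ (mul_pos ht ht)]
    have key : (t+γ)^4 - (1-γ)*t^2*E^2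
        = ((t+γ)^2 - γ*t*E)*((t+γ)^2 + γ*t*E) + d*(t^2*E^2) := by rw [hd]; ring
    have h2 : ((t+γ)^2 - γ*t*E)*((t+γ)^2 + γ*t*E) ≥ (-(d*t^2))*((t+γ)^2 + γ*t*E) :=
      mul_le_mul_of_nonneg_right hf hg
    have h3 : (-(d*t^2))*((t+γ)^2 + γ*t*E) + d*(t^2*E^2)
        = d*t^2*(E^2 - ((t+γ)^2 + γ*t*E)) := by ring
    nlinarith [mul_nonneg (mul_nonneg hd0 (sq_nonneg t)) (sub_nonneg.2 hEg)]

lemma Qid {γ ℓ : ℝ} (hγ : 0 < γ) (h1 : 1 < ℓ) :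
    ((ℓ-1)/((ℓ-1)+γ))^2 - (ℓ-1)/((1+γ)*(ℓ-1)+2*γ)
      = γ*(ℓ-1)*((ℓ-1)^2-γ)/(((ℓ-1)+γ)^2*((1+γ)*(ℓ-1)+2*γ)) := by
  have ht : (0:ℝ) < ℓ - 1 := by linarith
  have h2 : ((ℓ-1)+γ) ≠ 0 := by positivity
  have h3 : ((1+γ)*(ℓ-1)+2*γ) ≠ 0 := by positivity
  field_simp
  ring

lemma Qpos {γ ℓ : ℝ} (hγ : 0 < γ) (h1 : 1 < ℓ) (h2 : γ < (ℓ-1)^2) :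
    0 < ((ℓ-1)/((ℓ-1)+γ))^2 - (ℓ-1)/((1+γ)*(ℓ-1)+2*γ) := by
  rw [Qid hγ h1]
  have ht : (0:ℝ) < ℓ - 1 := by linarith
  have h4 : (0:ℝ) < (ℓ-1)^2 - γ := by linarith
  positivity

lemma Gf_deriv {γ ℓ : ℝ} (hγ : 0 < γ) (h1 : 1 < ℓ) (h2 : γ < (ℓ-1)^2) :
    HasDerivAt (Gf γ)
      (γ/((ℓ-1)+γ)^2 -
        (2*((ℓ-1)/((ℓ-1)+γ))*(γ/((ℓ-1)+γ)^2) - 2*γ/((1+γ)*(ℓ-1)+2*γ)^2) /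
          (2*Real.sqrt (((ℓ-1)/((ℓ-1)+γ))^2 - (ℓ-1)/((1+γ)*(ℓ-1)+2*γ)))) ℓ := by
  have ht : (0:ℝ) < ℓ - 1 := by linarith
  have hden1 : ((ℓ-1)+γ) ≠ 0 := by positivity
  have hden2 : ((1+γ)*(ℓ-1)+2*γ) ≠ 0 := by positivity
  have hQ := Qpos hγ h1 h2
  -- T
  have hTnum : HasDerivAt (fun x : ℝ => x - 1) 1 ℓ := (hasDerivAt_id ℓ).sub_const 1
  have hTden : HasDerivAt (fun x : ℝ => (x - 1) + γ) 1 ℓ := hTnum.add_const γ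
  have hT : HasDerivAt (fun x : ℝ => (x-1)/((x-1)+γ)) (γ/((ℓ-1)+γ)^2) ℓ := by
    have heq : (1*((ℓ-1)+γ) - (ℓ-1)*1)/((ℓ-1)+γ)^2 = γ/((ℓ-1)+γ)^2 := by
      field_simp
      ring
    exact heq ▸ hTnum.div hTden hden1
  -- P
  have hPden : HasDerivAt (fun x : ℝ => (1+γ)*(x-1)+2*γ) (1+γ) ℓ := by
    have := (hTnum.const_mul (1+γ)).add_const (2*γ)
    exact this.congr_deriv (by ring)
  have hP : HasDerivAt (fun x : ℝ => (x-1)/((1+γ)*(x-1)+2*γ))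
      (2*γ/((1+γ)*(ℓ-1)+2*γ)^2) ℓ := by
    have heq : (1*((1+γ)*(ℓ-1)+2*γ) - (ℓ-1)*(1+γ))/((1+γ)*(ℓ-1)+2*γ)^2
        = 2*γ/((1+γ)*(ℓ-1)+2*γ)^2 := by
      have : 1*((1+γ)*(ℓ-1)+2*γ) - (ℓ-1)*(1+γ) = 2*γ := by ring
      rw [this]
    exact heq ▸ hTnum.div hPden hden2
  -- Q
  have hQd : HasDerivAt
      (fun x : ℝ => ((x-1)/((x-1)+γ))^2 - (x-1)/((1+γ)*(x-1)+2*γ))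
      (2*((ℓ-1)/((ℓ-1)+γ))*(γ/((ℓ-1)+γ)^2) - 2*γ/((1+γ)*(ℓ-1)+2*γ)^2) ℓ := by
    have hpow := hT.pow 2
    have := hpow.sub hP
    exact this.congr_deriv (by norm_num)
  have hne : ((ℓ-1)/((ℓ-1)+γ))^2 - (ℓ-1)/((1+γ)*(ℓ-1)+2*γ) ≠ 0 := ne_of_gt hQ
  have hsq := hQd.sqrt hne
  exact hT.sub hsq

lemma Gf_deriv_nonpos {γ ℓ : ℝ} (hγ : 0 < γ) (hK : 1 ≤ γ^2 + γ) (h1 : 1 < ℓ)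
    (hdom : γ*(ℓ-1) + 2*γ ≤ (ℓ-1)^2) :
    deriv (Gf γ) ℓ ≤ 0 := by
  have ht : (0:ℝ) < ℓ - 1 := by linarith
  have h2 : γ < (ℓ-1)^2 := by nlinarith
  have hQ := Qpos hγ h1 h2
  rw [(Gf_deriv hγ h1 h2).deriv]
  set t := ℓ - 1 with htdef
  set E := (1+γ)*t+2*γ with hE
  have hEpos : (0:ℝ) < E := by positivity
  set q := Real.sqrt ((t/(t+γ))^2 - t/E) with hq
  have hq0 : 0 < q := Real.sqrt_pos.2 hQ
  have hq2 : q^2 = (t/(t+γ))^2 - t/E := Real.sq_sqrt hQ.le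
  set T' : ℝ := γ/(t+γ)^2 with hT'
  set Q' : ℝ := 2*(t/(t+γ))*T' - 2*γ/E^2 with hQ'
  have hT'pos : 0 < T' := by rw [hT']; positivity
  -- M1 : 0 ≤ Q'
  have hM1 : 0 ≤ Q' := by
    have hid : Q' = 2*γ*(t*E^2 - (t+γ)^3)/((t+γ)^3*E^2) := by
      rw [hQ', hT', hE]
      have hne : ((ℓ-1)+γ) ≠ 0 := by positivity
      have hne2 : ((1+γ)*(ℓ-1)+2*γ) ≠ 0 := by positivity
      field_simp
    rw [hid]
    have := poly1 hγ ht hdom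
    have h3 : 0 ≤ t*E^2 - (t+γ)^3 := by rw [hE]; linarith
    positivity
  -- M2 : 4 T'^2 Q ≤ Q'^2
  have hM2 : 4*T'^2*((t/(t+γ))^2 - t/E) ≤ Q'^2 := by
    have hid : Q'^2 - 4*T'^2*((t/(t+γ))^2 - t/E)
        = 4*γ^2*((t+γ)^4 - (1-γ)*t^2*E^2)/((t+γ)^4*E^4) := by
      rw [hQ', hT', hE]
      have hne : ((ℓ-1)+γ) ≠ 0 := by positivity
      have hne2 : ((1+γ)*(ℓ-1)+2*γ) ≠ 0 := by positivity
      field_simp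
      ring
    have := poly2 hγ ht hK
    have h3 : 0 ≤ (t+γ)^4 - (1-γ)*t^2*E^2 := by rw [hE]; linarith
    have h6 : (0:ℝ) ≤ 4*γ^2*((t+γ)^4 - (1-γ)*t^2*E^2)/((t+γ)^4*E^4) := by positivity
    linarith [hid]
  -- conclude
  have hstep : 2*T'*q ≤ Q' := by
    have h7 : (2*T'*q)^2 ≤ Q'^2 := by
      have h8 : (2*T'*q)^2 = 4*T'^2*q^2 := by ring
      rw [h8, hq2]; exact hM2
    have h9 := Real.sqrt_le_sqrt h7
    rwa [Real.sqrt_sq (by positivity), Real.sqrt_sq hM1] at h9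
  rw [sub_nonpos, le_div_iff₀ (by positivity : (0:ℝ) < 2*q)]
  calc T' * (2*q) = 2*T'*q := by ring
    _ ≤ Q' := hstep

lemma ell1_gt_one {γ : ℝ} (hγ : 0 < γ) : 1 < ellOnePlus γ := by
  rw [ellOnePlus]
  have := Real.sqrt_nonneg (γ^2 + 8*γ)
  linarith

lemma dom_of_mem {γ ℓ : ℝ} (hγ : 0 < γ) (hℓ : ellOnePlus γ ≤ ℓ) :
    γ*(ℓ-1) + 2*γ ≤ (ℓ-1)^2 := by
  set s := Real.sqrt (γ^2 + 8*γ) with hs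
  have hs0 : 0 ≤ s := Real.sqrt_nonneg _
  have hs2 : s^2 = γ^2 + 8*γ := Real.sq_sqrt (by positivity)
  have hle : (γ + s)/2 ≤ ℓ - 1 := by rw [ellOnePlus] at hℓ; linarith
  have h1' : 0 ≤ (ℓ-1) - (γ+s)/2 := by linarith
  have h2' : 0 ≤ (ℓ-1) - (γ-s)/2 := by linarith
  nlinarith [mul_nonneg h1' h2']

lemma gam_lt_sq {γ ℓ : ℝ} (hγ : 0 < γ) (h1 : 1 < ℓ)
    (hdom : γ*(ℓ-1) + 2*γ ≤ (ℓ-1)^2) : γ < (ℓ-1)^2 := by nlinarith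

lemma Gf_cont (hγ : 0 < γ) : ContinuousOn (Gf γ) (Set.Ici (ellOnePlus γ)) := by
  have key : ∀ ℓ ∈ Set.Ici (ellOnePlus γ), (1:ℝ) < ℓ := fun ℓ hℓ =>
    lt_of_lt_of_le (ell1_gt_one hγ) hℓ
  have h1 : ContinuousOn (fun x : ℝ => (x-1)/((x-1)+γ)) (Set.Ici (ellOnePlus γ)) := by
    apply ContinuousOn.div (by fun_prop) (by fun_prop)
    intro x hx
    have := key x hx
    have : (0:ℝ) < (x-1)+γ := by linarith
    linarith
  have h2 : ContinuousOn (fun x : ℝ => (x-1)/((1+γ)*(x-1)+2*γ)) (Set.Ici (ellOnePlus γ)) := by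
    apply ContinuousOn.div (by fun_prop) (by fun_prop)
    intro x hx
    have := key x hx
    have : (0:ℝ) < (1+γ)*(x-1)+2*γ := by nlinarith
    linarith
  exact h1.sub (Real.continuous_sqrt.comp_continuousOn ((h1.pow 2).sub h2))

lemma Gf_anti (hγ : 0 < γ) (hK : 1 ≤ γ^2 + γ) :
    AntitoneOn (Gf γ) (Set.Ici (ellOnePlus γ)) := by
  apply antitoneOn_of_deriv_nonpos (convex_Ici _) (Gf_cont hγ)
  · rw [interior_Ici]
    intro x hx
    have h1 : 1 < x := lt_trans (ell1_gt_one hγ) hx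
    have hdom := dom_of_mem hγ (le_of_lt hx)
    exact (Gf_deriv hγ h1 (gam_lt_sq hγ h1 hdom)).differentiableAt.differentiableWithinAt
  · rw [interior_Ici]
    intro x hx
    have h1 : 1 < x := lt_trans (ell1_gt_one hγ) hx
    exact Gf_deriv_nonpos hγ hK h1 (dom_of_mem hγ (le_of_lt hx))

lemma Gf_lim (hγ : 0 < γ) : Tendsto (Gf γ) atTop (𝓝 (1 - Real.sqrt (γ/(γ+1)))) := by
  have h1 : Tendsto (fun x : ℝ => x - 1) atTop atTop :=
    tendsto_atTop_add_const_right _ (-1) tendsto_id |>.congr (fun x => by simp [sub_eq_add_neg, add_comm])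
  have hTd : Tendsto (fun x : ℝ => (x-1)+γ) atTop atTop :=
    tendsto_atTop_add_const_right _ γ h1
  have hT : Tendsto (fun x : ℝ => (x-1)/((x-1)+γ)) atTop (𝓝 1) := by
    have h2 : Tendsto (fun x : ℝ => γ/((x-1)+γ)) atTop (𝓝 0) :=
      Tendsto.div_atTop tendsto_const_nhds hTd
    have h3 : Tendsto (fun x : ℝ => 1 - γ/((x-1)+γ)) atTop (𝓝 (1-0)) :=
      (tendsto_const_nhds : Tendsto (fun _ : ℝ => (1:ℝ)) atTop (𝓝 1)).sub h2
    rw [sub_zero] at h3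
    apply Tendsto.congr' _ h3
    filter_upwards [eventually_ge_atTop (2 - γ)] with x hx
    have hne : (x-1)+γ ≠ 0 := by intro h; nlinarith
    field_simp
    ring
  have hP : Tendsto (fun x : ℝ => (x-1)/((1+γ)*(x-1)+2*γ)) atTop (𝓝 (1/(1+γ))) := by
    have hinv : Tendsto (fun x : ℝ => 2*γ/(x-1)) atTop (𝓝 0) :=
      Tendsto.div_atTop tendsto_const_nhds h1
    have h3 : Tendsto (fun x : ℝ => (1+γ) + 2*γ/(x-1)) atTop (𝓝 ((1+γ)+0)) :=
      (tendsto_const_nhds : Tendsto (fun _ : ℝ => (1+γ:ℝ)) atTop (𝓝 (1+γ))).add hinv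
    rw [add_zero] at h3
    have h4 := h3.inv₀ (by positivity : (1+γ:ℝ) ≠ 0)
    rw [← one_div] at h4
    apply Tendsto.congr' _ h4
    filter_upwards [eventually_ge_atTop (2:ℝ)] with x hx
    have hx1 : (0:ℝ) < x - 1 := by linarith
    have hE : (0:ℝ) < (1+γ)*(x-1)+2*γ := by positivity
    rw [show (1+γ) + 2*γ/(x-1) = ((1+γ)*(x-1)+2*γ)/(x-1) by field_simp, inv_div]
  have hQ : Tendsto (fun x : ℝ => ((x-1)/((x-1)+γ))^2 - (x-1)/((1+γ)*(x-1)+2*γ))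
      atTop (𝓝 (γ/(γ+1))) := by
    have h5 := (hT.pow 2).sub hP
    have : (1:ℝ)^2 - 1/(1+γ) = γ/(γ+1) := by
      have h0 : (γ:ℝ)+1 ≠ 0 := by positivity
      rw [one_pow, add_comm 1 γ, eq_div_iff h0, sub_mul, one_div, inv_mul_cancel₀ h0]
      ring
    rwa [this] at h5
  have hsq := (Real.continuous_sqrt.tendsto _).comp hQ
  exact hT.sub hsq

lemma Gf_boundary {γ t : ℝ} (hγ : 0 < γ) (ht : 0 < t) (heq : γ*t+2*γ = t^2) :
    Gf γ (1+t) = 1/(1+t) := by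
  have ht2 : t + 2 ≠ 0 := by positivity
  have hγ' : γ = t^2/(t+2) := by rw [eq_div_iff ht2]; linarith
  have h1t : (0:ℝ) < 1 + t := by linarith
  have hQv : ((1+t-1)/((1+t-1)+γ))^2 - (1+t-1)/((1+γ)*(1+t-1)+2*γ) = (t/(2*(1+t)))^2 := by
    rw [hγ']
    have e1 : (1:ℝ)+t-1 = t := by ring
    rw [e1]
    have d1 : t + t^2/(t+2) ≠ 0 := by positivity
    have d2 : (1+t^2/(t+2))*t+2*(t^2/(t+2)) ≠ 0 := by positivity
    field_simp
    ring
  rw [Gf, hQv, Real.sqrt_sq (by positivity)]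
  rw [hγ']
  have e1 : (1:ℝ)+t-1 = t := by ring
  rw [e1]
  have d1 : t + t^2/(t+2) ≠ 0 := by positivity
  field_simp
  ring

end Aux

/-- for `γ > (√5 − 1)/2`, `ℓ ↦ ν₋(A(ℓ,η₁*(ℓ;γ);γ))` is
nonincreasing on `ℓ > 1` and bounded below by `1 − sqrt(γ/(γ+1))`. -/
theorem stmt9 (γ : ℝ) (hγ : (Real.sqrt 5 - 1) / 2 < γ) :
    AntitoneOn (fun ℓ => nuM γ ℓ (eta1star γ ℓ)) (Set.Ioi 1) ∧
    ∀ ℓ : ℝ, 1 < ℓ →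
      1 - Real.sqrt (γ / (γ + 1)) ≤ nuM γ ℓ (eta1star γ ℓ) := by
  have h5s : Real.sqrt 5 ^ 2 = 5 := Real.sq_sqrt (by norm_num)
  have h5n : (0:ℝ) ≤ Real.sqrt 5 := Real.sqrt_nonneg 5
  have h52 : (2:ℝ) ≤ Real.sqrt 5 := by nlinarith
  have hγ0 : 0 < γ := by linarith
  have hK : 1 ≤ γ^2 + γ := by nlinarith
  -- boundary value
  have hL1 : 1 < ellOnePlus γ := ell1_gt_one hγ0
  have hb : Gf γ (ellOnePlus γ) = 1/(ellOnePlus γ) := by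
    have hs2 : Real.sqrt (γ^2+8*γ) ^ 2 = γ^2+8*γ := Real.sq_sqrt (by positivity)
    have hs0 : (0:ℝ) ≤ Real.sqrt (γ^2+8*γ) := Real.sqrt_nonneg _
    have ht : (0:ℝ) < (γ + Real.sqrt (γ^2+8*γ))/2 := by positivity
    have heq : γ*((γ + Real.sqrt (γ^2+8*γ))/2) + 2*γ = ((γ + Real.sqrt (γ^2+8*γ))/2)^2 := by
      linear_combination (-(1:ℝ)/4) * hs2
    have := Gf_boundary hγ0 ht heq
    rw [ellOnePlus]
    exact this
  have hanti := Gf_anti hγ0 hK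
  have lbGf : ∀ ℓ, ellOnePlus γ ≤ ℓ → 1 - Real.sqrt (γ/(γ+1)) ≤ Gf γ ℓ := by
    intro ℓ hℓ
    apply le_of_tendsto (Gf_lim hγ0)
    filter_upwards [Filter.eventually_ge_atTop ℓ] with s hs
    exact hanti hℓ (le_trans hℓ hs) hs
  constructor
  · intro x hx y hy hxy
    simp only []
    have hx1 : (1:ℝ) < x := hx
    have hy1 : (1:ℝ) < y := hy
    by_cases hxL : ellOnePlus γ < x
    · have hyL : ellOnePlus γ < y := lt_of_lt_of_le hxL hxy
      rw [nuM_high hγ0 hxL, nuM_high hγ0 hyL]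
      exact hanti hxL.le hyL.le hxy
    · by_cases hyL : ellOnePlus γ < y
      · rw [nuM_high hγ0 hyL, nuM_low hγ0 hx1 hxL]
        have h1 : Gf γ y ≤ Gf γ (ellOnePlus γ) := hanti Set.self_mem_Ici hyL.le hyL.le
        have h2 : 1/(ellOnePlus γ) ≤ 1/x :=
          one_div_le_one_div_of_le (by linarith) (not_lt.1 hxL)
        rw [hb] at h1
        linarith
      · rw [nuM_low hγ0 hx1 hxL, nuM_low hγ0 hy1 hyL]
        exact one_div_le_one_div_of_le (by linarith) hxy
  · intro ℓ hℓ
    by_cases hL : ellOnePlus γ < ℓ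
    · rw [nuM_high hγ0 hL]
      exact lbGf ℓ hL.le
    · rw [nuM_low hγ0 hℓ hL]
      have h1 : 1 - Real.sqrt (γ/(γ+1)) ≤ 1/(ellOnePlus γ) := by
        rw [← hb]; exact lbGf _ (le_refl _)
      have h2 : 1/(ellOnePlus γ) ≤ 1/ℓ :=
        one_div_le_one_div_of_le (by linarith) (not_lt.1 hL)
      linarith
end
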